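/- arXiv:1408.3205 — 6 statements merged into one kernel-verified Lean document; each statement's English description precedes it below -/
import Mathlib

section
/- Let u and k be nonnegative integers with 1+k+u ≥ 3 and let w ≥ 3 be an integer. Suppose there exists a (1,2)-DTA(N; 1+k+u, (2^u 3^k w^1)), i.e., a (1,2)-detecting array on u two-level factors, k three-level factors and one w-level factor, whose size N meets the lower bound (so N = 6w if k ≥ 1 and N = 4w if k = 0 and u ≥ 1). Then either u < 2 or k < 2. Moreover: if k = 0 then u ≤ 3; if k = 1 then u ≤ 4; if u = 0 then k ≤ 5; and if u = 1 then k ≤ 3. -/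
/-- An array `A` (rows indexed by `R`, columns by `J`) is of type `v` if every
entry in column `j` lies in `Z_{v j} = {0, 1, …, v j - 1}`. -/
def IsArray {R J : Type*} (v : J → ℕ) (A : R → J → ℕ) : Prop :=
  ∀ r j, A r j < v j

/-- An `s`-way interaction: a set of `s` pairs `(j, σ)` with pairwise distinct
column indices `j` and value `σ ∈ Z_{v j}`. -/
def IsInteraction {J : Type*} [DecidableEq J] (v : J → ℕ) (s : ℕ)
    (T : Finset (J × ℕ)) : Prop :=
  T.card = s ∧ (T.image Prod.fst).card = s ∧ ∀ p ∈ T, p.2 < v p.1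

/-- `rho A T`: the set of rows of `A` in which the interaction `T` is covered. -/
def rho {R J : Type*} [Fintype R] (A : R → J → ℕ) (T : Finset (J × ℕ)) :
    Finset R :=
  Finset.univ.filter fun r => ∀ p ∈ T, A r p.1 = p.2

/-- `rhoSet A 𝒯 = ⋃_{T ∈ 𝒯} rho A T`. -/
def rhoSet {R J : Type*} [Fintype R] [DecidableEq R] (A : R → J → ℕ)
    (Ts : Finset (Finset (J × ℕ))) : Finset R :=
  Ts.sup (rho A)

/-- A `(d,t)`-detecting array of type `v`: for every `t`-way interaction `T` and
every set `𝒯` of exactly `d` `t`-way interactions,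
`ρ(A,T) ⊆ ρ(A,𝒯) ↔ T ∈ 𝒯`. -/
def IsDTA {R J : Type*} [Fintype R] [DecidableEq R] [DecidableEq J] (v : J → ℕ) (d t : ℕ)
    (A : R → J → ℕ) : Prop :=
  IsArray v A ∧
    ∀ T : Finset (J × ℕ), IsInteraction v t T →
      ∀ Ts : Finset (Finset (J × ℕ)), Ts.card = d →
        (∀ T' ∈ Ts, IsInteraction v t T') →
          (rho A T ⊆ rhoSet A Ts ↔ T ∈ Ts)

/-- A mixed covering array `MCA_λ(N; t, k, v)`: an array of type `v` such that
`|ρ(A,T)| ≥ λ` for every `t`-way interaction `T`. -/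
def IsMCA {R J : Type*} [Fintype R] [DecidableEq J] (v : J → ℕ) (lam t : ℕ)
    (A : R → J → ℕ) : Prop :=
  IsArray v A ∧ ∀ T : Finset (J × ℕ), IsInteraction v t T → lam ≤ (rho A T).card

/-- Super-simple of strength `t`: every `(t+1)`-way interaction is covered by at
most one row. -/
def IsSuperSimple {R J : Type*} [Fintype R] [DecidableEq J] (v : J → ℕ) (t : ℕ)
    (A : R → J → ℕ) : Prop :=
  ∀ T : Finset (J × ℕ), IsInteraction v (t + 1) T → (rho A T).card ≤ 1

/-- An orthogonal array `OA_λ(t, k, v)`: all entries in `Z_v` and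
`|ρ(A,T)| = λ` for every `t`-way interaction `T`. (The size requirement
`N = λ·v^t` is imposed on the row-index type in the statements.) -/
def IsOA {R J : Type*} [Fintype R] [DecidableEq J] (vlev lam t : ℕ)
    (A : R → J → ℕ) : Prop :=
  IsArray (fun _ : J => vlev) A ∧
    ∀ T : Finset (J × ℕ), IsInteraction (fun _ : J => vlev) t T →
      (rho A T).card = lam

/-- `Te` is an extension of the interaction `T`: it is obtained from `T` by
adjoining one pair `(j, σ)` with `σ ∈ Z_{v j}` whose column index `j` occurs in
no pair of `T`. -/
def IsExtension {J : Type*} [DecidableEq J] (v : J → ℕ)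
    (T Te : Finset (J × ℕ)) : Prop :=
  ∃ p : J × ℕ, p.2 < v p.1 ∧ (∀ q ∈ T, q.1 ≠ p.1) ∧ Te = insert p T

/-- `A` is `d`-extendible (with respect to strength `t`): for every `t`-way
interaction `T` and every list of `d` extensions `T_1, …, T_d` of `T`
(repetitions allowed), `ρ(A,T) \ (ρ(A,T_1) ∪ ⋯ ∪ ρ(A,T_d))` is nonempty. -/
def IsExtendible {R J : Type*} [Fintype R] [DecidableEq J] (v : J → ℕ)
    (d t : ℕ) (A : R → J → ℕ) : Prop :=
  ∀ T : Finset (J × ℕ), IsInteraction v t T →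
    ∀ Te : Fin d → Finset (J × ℕ), (∀ i, IsExtension v T (Te i)) →
      ∃ r ∈ rho A T, ∀ i, r ∉ rho A (Te i)

/-!
In an optimum `(1,2)`-detecting array every pair `(j, a), (c, x)` with `c` the `w`-level column and
`j` of the largest other level `m` is covered exactly twice: detection forces at least two
covering rows, and `N = 2 m w` leaves no room for more. Fix the slice `B` of rows with value `0`
in column `c`. The cells of a top-level column in `B` are then 2-sets, and detection forbids a
cell of one non-`w` column inside a cell of another. Counting these distinct cells bounds the
columns: they are distinct 2-subsets of `B` (`k = 0`, `u = 0`); the ternary 2-cells cross the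
split of `B` by a binary column, so there are at most `p (6 - p) ≤ 9` of them (`u = 1`); binary
cells pick one row from each of the three ternary 2-cells, so there are at most `2³` of them
(`k = 1`). For two binary and two ternary columns, every row has two rows of `B` disagreeing
with it in both binary columns, so each of the four binary quadrants of `B` has two rows,
against `|B| = 6`.
-/

open Finset Function

variable {R J : Type*}

section Interactions

variable [DecidableEq J] {v : J → ℕ}

lemma isInteraction_pair {j j' : J} {a b : ℕ} (hj : j ≠ j') (ha : a < v j) (hb : b < v j') :
    IsInteraction v 2 {(j, a), (j', b)} := by
  refine ⟨card_pair (by simp [hj]), ?_, by simp [ha, hb]⟩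
  rw [image_insert, image_singleton, card_pair hj]

variable [Fintype R] {A : R → J → ℕ}

lemma mem_rho_pair {j j' : J} {a b : ℕ} {r : R} :
    r ∈ rho A {(j, a), (j', b)} ↔ A r j = a ∧ A r j' = b := by
  simp [rho]

variable [DecidableEq R]

lemma IsDTA.eq_of_rho_subset {t : ℕ} (hA : IsDTA v 1 t A) {T T' : Finset (J × ℕ)}
    (hT : IsInteraction v t T) (hT' : IsInteraction v t T') (h : rho A T ⊆ rho A T') :
    T = T' := by
  have h' := (hA.2 T hT {T'} (card_singleton _) (by simpa using hT')).1
  rw [rhoSet, sup_singleton] at h'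
  exact mem_singleton.1 (h' h)

lemma IsDTA.two_le_card_rho_pair [Fintype J] (hA : IsDTA v 1 2 A) (hJ : 2 < Fintype.card J)
    (hv : ∀ j, 0 < v j) {j j' : J} {a b : ℕ} (hj : j ≠ j') (ha : a < v j) (hb : b < v j') :
    2 ≤ (rho A {(j, a), (j', b)}).card := by
  by_contra! hlt
  obtain ⟨j₃, -, hj₃⟩ := exists_mem_notMem_of_card_lt_card (s := {j, j'}) (t := univ)
    (card_le_two.trans_lt (by rwa [card_univ]))
  simp only [mem_insert, mem_singleton, not_or] at hj₃
  -- With at most one covering row, those rows also cover `{(j', b), (j₃, σ)}` for some `σ`.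
  obtain ⟨σ, hσ, hrows⟩ : ∃ σ < v j₃, ∀ r ∈ rho A {(j, a), (j', b)}, A r j₃ = σ := by
    rcases (rho A {(j, a), (j', b)}).eq_empty_or_nonempty with h | ⟨r, hr⟩
    · exact ⟨0, hv j₃, by simp [h]⟩
    · exact ⟨A r j₃, hA.1 r j₃, fun r' hr' => by rw [card_le_one.1 (by omega) r' hr' r hr]⟩
  have hsub : rho A {(j, a), (j', b)} ⊆ rho A {(j', b), (j₃, σ)} := fun r hr =>
    mem_rho_pair.2 ⟨(mem_rho_pair.1 hr).2, hrows r hr⟩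
  have heq := hA.eq_of_rho_subset (isInteraction_pair hj ha hb)
    (isInteraction_pair (Ne.symm hj₃.2) hb hσ) hsub
  have hmem : (j, a) ∈ ({(j', b), (j₃, σ)} : Finset (J × ℕ)) := heq ▸ mem_insert_self _ _
  simp only [mem_insert, mem_singleton, Prod.mk.injEq] at hmem
  rcases hmem with ⟨h, -⟩ | ⟨h, -⟩
  exacts [hj h, hj₃.1 h.symm]

lemma IsDTA.card_rho_pair_eq_two [Fintype J] (hA : IsDTA v 1 2 A) (hJ : 2 < Fintype.card J)
    (hv : ∀ j, 0 < v j) {j j' : J} (hj : j ≠ j') (hR : Fintype.card R = 2 * (v j * v j'))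
    {a b : ℕ} (ha : a < v j) (hb : b < v j') : (rho A {(j, a), (j', b)}).card = 2 := by
  set P := range (v j) ×ˢ range (v j')
  have hfib : Fintype.card R = ∑ p ∈ P, (rho A {(j, p.1), (j', p.2)}).card := by
    rw [← card_univ, card_eq_sum_card_fiberwise (f := fun r => (A r j, A r j')) (t := P)
      fun r _ => by simp [P, hA.1 r j, hA.1 r j']]
    refine sum_congr rfl fun p _ => congrArg card ?_
    ext r
    simp only [mem_filter, mem_univ, true_and, mem_rho_pair, Prod.ext_iff]
  have hall := (sum_eq_sum_iff_of_le (f := fun _ => 2) fun p hp =>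
    hA.two_le_card_rho_pair hJ hv hj (mem_range.1 (mem_product.1 hp).1)
      (mem_range.1 (mem_product.1 hp).2)).1
    (by rw [← hfib, hR, sum_const, smul_eq_mul, card_product, card_range, card_range]; ring)
  exact (hall (a, b) (by simp [ha, hb])).symm

end Interactions

def cell (A : R → J → ℕ) (B : Finset R) (j : J) (a : ℕ) : Finset R :=
  B.filter fun r => A r j = a

def NoNestedCells (v : J → ℕ) (A : R → J → ℕ) (B : Finset R) : Prop :=
  ∀ ⦃j j' : J⦄ ⦃a b : ℕ⦄, a < v j → b < v j' → cell A B j a ⊆ cell A B j' b → j = j' ∧ a = b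

section SliceOfDTA

variable [Fintype R] [DecidableEq J] {v : J → ℕ} {A : R → J → ℕ}

lemma cell_rho_singleton (c j : J) (x a : ℕ) :
    cell A (rho A {(c, x)}) j a = rho A {(j, a), (c, x)} := by
  ext r
  simp [cell, rho, and_comm]

variable [DecidableEq R]

lemma IsDTA.noNestedCells {J' : Type*} (hA : IsDTA v 1 2 A) {e : J' → J} (he : Injective e)
    {c : J} (hc : ∀ j, e j ≠ c) {x : ℕ} (hx : x < v c) :
    NoNestedCells (fun j => v (e j)) (fun r j => A r (e j)) (rho A {(c, x)}) := by
  intro j j' a b ha hb hsub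
  have heq := hA.eq_of_rho_subset (isInteraction_pair (hc j) ha hx)
    (isInteraction_pair (hc j') hb hx)
    (by rw [← cell_rho_singleton, ← cell_rho_singleton]; exact hsub)
  have hmem : (e j, a) ∈ ({(e j', b), (c, x)} : Finset (J × ℕ)) := heq ▸ mem_insert_self _ _
  simp only [mem_insert, mem_singleton, Prod.mk.injEq, hc j, false_and, or_false] at hmem
  exact ⟨he hmem.1, hmem.2⟩

lemma IsDTA.card_cell_eq_two [Fintype J] (hA : IsDTA v 1 2 A) (hJ : 2 < Fintype.card J)
    (hv : ∀ j, 0 < v j) {c j : J} (hj : j ≠ c) (hR : Fintype.card R = 2 * (v j * v c))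
    {a : ℕ} (ha : a < v j) : (cell A (rho A {(c, 0)}) j a).card = 2 := by
  rw [cell_rho_singleton]
  exact hA.card_rho_pair_eq_two hJ hv hj hR ha (hv c)

end SliceOfDTA

lemma Finset.card_inter_le_one_of_not_subset {α : Type*} [DecidableEq α] {s t : Finset α}
    (hs : s.card = 2) (h : ¬s ⊆ t) : (s ∩ t).card ≤ 1 := by
  by_contra! hlt
  exact h (inter_eq_left.1 (eq_of_subset_of_card_le inter_subset_left (by omega)))

lemma Fintype.card_le_prod_card_of_transversals {ι α β : Type*} [Fintype ι] [DecidableEq ι]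
    [Fintype α] [DecidableEq β] (X : ι → Finset β) {ψ : α → Finset β} (hψ : Injective ψ)
    (hcover : ∀ x, ψ x ⊆ univ.biUnion X) (hone : ∀ x i, (ψ x ∩ X i).card = 1) :
    Fintype.card α ≤ ∏ i, (X i).card := by
  have hmem : ∀ x, ψ x ∈ (Fintype.piFinset X).image fun f => univ.image f := by
    intro x
    choose f hf using fun i => card_eq_one.1 (hone x i)
    have hfψ : ∀ i, f i ∈ ψ x ∩ X i := fun i => hf i ▸ mem_singleton_self (f i)
    refine mem_image.2 ⟨f, Fintype.mem_piFinset.2 fun i => (mem_inter.1 (hfψ i)).2, ?_⟩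
    ext r
    simp only [mem_image, mem_univ, true_and]
    constructor
    · rintro ⟨i, rfl⟩
      exact (mem_inter.1 (hfψ i)).1
    · intro hr
      obtain ⟨i, -, hri⟩ := mem_biUnion.1 (hcover x hr)
      exact ⟨i, (mem_singleton.1 (hf i ▸ mem_inter.2 ⟨hr, hri⟩)).symm⟩
  calc Fintype.card α = (univ.image ψ).card := (card_image_of_injective _ hψ).symm
    _ ≤ ((Fintype.piFinset X).image fun f => univ.image f).card :=
      card_le_card (image_subset_iff.2 fun x _ => hmem x)
    _ ≤ ∏ i, (X i).card := card_image_le.trans (Fintype.card_piFinset X).le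

section Cells

variable {v : J → ℕ} {A : R → J → ℕ} {B : Finset R}

lemma cell_subset {j : J} {a : ℕ} : cell A B j a ⊆ B := filter_subset _ _

lemma IsArray.card_eq_sum_card_cell (hA : IsArray v A) (S : Finset R) (j : J) :
    S.card = ∑ a ∈ range (v j), (cell A S j a).card :=
  card_eq_sum_card_fiberwise fun r _ => mem_range.2 (hA r j)

lemma IsArray.card_eq_two_mul (hA : IsArray v A) {j : J}
    (h2 : ∀ a < v j, (cell A B j a).card = 2) : B.card = 2 * v j := by
  rw [hA.card_eq_sum_card_cell B j, sum_congr rfl fun a ha => h2 a (mem_range.1 ha)]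
  simp [mul_comm]

lemma NoNestedCells.injective_cell (hU : NoNestedCells v A B) {ι : Type*} {m : ℕ} (f : ι ↪ J)
    (hm : ∀ i, m ≤ v (f i)) : Injective fun p : ι × Fin m => cell A B (f p.1) p.2 := by
  rintro ⟨i, a⟩ ⟨i', b⟩ h
  obtain ⟨hii', hab⟩ := hU (a.2.trans_le (hm i)) (b.2.trans_le (hm i')) h.subset
  simp [f.injective hii', Fin.ext hab]

theorem NoNestedCells.card_mul_le_choose (hU : NoNestedCells v A B) {ι : Type*} [Fintype ι] {m : ℕ}
    (f : ι ↪ J) (hv : ∀ i, v (f i) = m) (h2 : ∀ i, ∀ a < m, (cell A B (f i) a).card = 2) :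
    Fintype.card ι * m ≤ B.card.choose 2 := by
  have := card_le_card_of_injOn (s := univ) (t := B.powersetCard 2) _
    (fun p _ => mem_powersetCard.2 ⟨cell_subset, h2 p.1 p.2 p.2.2⟩)
    (hU.injective_cell f fun i => (hv i).ge).injOn
  simpa [card_powersetCard] using this

variable [DecidableEq R]

lemma cell_cell (g j : J) (a b : ℕ) :
    cell A (cell A B g a) j b = cell A B g a ∩ cell A B j b := by
  ext r
  simp only [cell, mem_filter, mem_inter]
  tauto

lemma IsArray.subset_biUnion_cell (hA : IsArray v A) {j : J} {n : ℕ} (hj : v j = n)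
    {S : Finset R} (hS : S ⊆ B) : S ⊆ univ.biUnion fun b : Fin n => cell A B j b := by
  intro r hr
  simp only [mem_biUnion, mem_univ, true_and, cell, mem_filter]
  exact ⟨⟨A r j, hj ▸ hA r j⟩, hS hr, rfl⟩

namespace NoNestedCells

lemma card_inter_le_one (hU : NoNestedCells v A B) {g j : J} (hgj : g ≠ j) {a b : ℕ}
    (ha : a < v g) (hb : b < v j) (hg : (cell A B g a).card = 2) :
    (cell A B g a ∩ cell A B j b).card ≤ 1 :=
  card_inter_le_one_of_not_subset hg fun h => hgj (hU ha hb h).1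

lemma eq_of_mem_cell_of_apply_eq (hU : NoNestedCells v A B) (hA : IsArray v A) {g j : J}
    (hgj : g ≠ j) {a : ℕ} (ha : a < v g) (hg : (cell A B g a).card = 2) {r r' : R}
    (hr : r ∈ cell A B g a) (hr' : r' ∈ cell A B g a) (h : A r' j = A r j) : r' = r :=
  card_le_one.1 (hU.card_inter_le_one hgj ha (hA r j) hg)
    r' (mem_inter.2 ⟨hr', mem_filter.2 ⟨cell_subset hr', h⟩⟩)
    r (mem_inter.2 ⟨hr, mem_filter.2 ⟨cell_subset hr, rfl⟩⟩)

lemma card_inter_cell_eq_one (hU : NoNestedCells v A B) (hA : IsArray v A) {g j : J}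
    (hgj : g ≠ j) (hj : v j = 2) {a : ℕ} (ha : a < v g) (hg : (cell A B g a).card = 2)
    {b : ℕ} (hb : b < 2) : (cell A B g a ∩ cell A B j b).card = 1 := by
  have h₀ := hU.card_inter_le_one hgj ha (b := 0) (by omega) hg
  have h₁ := hU.card_inter_le_one hgj ha (b := 1) (by omega) hg
  have hsum := hA.card_eq_sum_card_cell (cell A B g a) j
  rw [hj, sum_range_succ, sum_range_succ, sum_range_zero, cell_cell, cell_cell, hg] at hsum
  interval_cases b <;> omega

theorem four_mul_card_mul_le_sq (hU : NoNestedCells v A B) (hA : IsArray v A) {j₀ : J}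
    (hj₀ : v j₀ = 2) {ι : Type*} [Fintype ι] {m : ℕ} (f : ι ↪ J) (hf : ∀ i, f i ≠ j₀)
    (hv : ∀ i, v (f i) = m) (h2 : ∀ i, ∀ a < m, (cell A B (f i) a).card = 2) :
    4 * (Fintype.card ι * m) ≤ B.card ^ 2 := by
  have hle := Fintype.card_le_prod_card_of_transversals (fun b : Fin 2 => cell A B j₀ b)
    (hU.injective_cell f fun i => (hv i).ge) (fun _ => hA.subset_biUnion_cell hj₀ cell_subset)
    fun p b => hU.card_inter_cell_eq_one hA (hf p.1) hj₀ ((hv p.1).symm ▸ p.2.2)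
      (h2 _ _ p.2.2) b.2
  have hB := hA.card_eq_sum_card_cell B j₀
  rw [hj₀, sum_range_succ, sum_range_succ, sum_range_zero, zero_add] at hB
  simp only [Fintype.card_prod, Fintype.card_fin, Fin.prod_univ_two, Fin.val_zero,
    Fin.val_one] at hle
  rw [hB]
  nlinarith [sq_nonneg ((cell A B j₀ 0).card - (cell A B j₀ 1).card : ℤ)]

theorem card_mul_two_le_two_pow (hU : NoNestedCells v A B) (hA : IsArray v A) {g : J} {m : ℕ}
    (hg : v g = m) (h2 : ∀ a < m, (cell A B g a).card = 2) {ι : Type*} [Fintype ι]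
    (f : ι ↪ J) (hf : ∀ i, f i ≠ g) (hv : ∀ i, v (f i) = 2) :
    Fintype.card ι * 2 ≤ 2 ^ m := by
  have hle := Fintype.card_le_prod_card_of_transversals (fun a : Fin m => cell A B g a)
    (hU.injective_cell f fun i => (hv i).ge) (fun _ => hA.subset_biUnion_cell hg cell_subset)
    fun p a => by
      rw [inter_comm]
      exact hU.card_inter_cell_eq_one hA (hf p.1).symm (hv p.1) (hg ▸ a.2) (h2 a a.2) p.2.2
  simpa [h2 _ (Fin.isLt _)] using hle

/-- The witnesses are the partners of `r` in its cells of `g₀` and `g₁`, two distinct 2-sets. -/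
lemma exists_two_le_card_forall_ne (hU : NoNestedCells v A B) (hA : IsArray v A) {g₀ g₁ : J}
    (hg : g₀ ≠ g₁) (h₀ : ∀ a < v g₀, (cell A B g₀ a).card = 2)
    (h₁ : ∀ a < v g₁, (cell A B g₁ a).card = 2) {r : R} (hr : r ∈ B) :
    ∃ P ⊆ B, 2 ≤ P.card ∧ ∀ r' ∈ P, ∀ j, j ≠ g₀ → j ≠ g₁ → A r' j ≠ A r j := by
  set s := cell A B g₀ (A r g₀)
  set t := cell A B g₁ (A r g₁)
  have hrs : r ∈ s := mem_filter.2 ⟨hr, rfl⟩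
  have hrt : r ∈ t := mem_filter.2 ⟨hr, rfl⟩
  have hs : s.card = 2 := h₀ _ (hA r g₀)
  have ht : t.card = 2 := h₁ _ (hA r g₁)
  refine ⟨(s ∪ t).erase r, (erase_subset _ _).trans (union_subset cell_subset cell_subset),
    ?_, fun r' hr' j hj₀ hj₁ heq => ?_⟩
  · have := card_union_add_card_inter s t
    have := card_erase_of_mem (mem_union_left t hrs)
    have : (s ∩ t).card ≤ 1 := hU.card_inter_le_one hg (hA r g₀) (hA r g₁) hs
    omega
  · obtain ⟨hne, hr'⟩ := mem_erase.1 hr'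
    rcases mem_union.1 hr' with h | h
    · exact hne (hU.eq_of_mem_cell_of_apply_eq hA hj₀.symm (hA r g₀) hs hrs h heq)
    · exact hne (hU.eq_of_mem_cell_of_apply_eq hA hj₁.symm (hA r g₁) ht hrt h heq)

/-- Two binary columns `j 0, j 1` split `B` into four quadrants. None is empty, as no cell of
`j 0` lies inside a cell of `j 1`; so each, being the set of rows opposite to some row of the
opposite quadrant, has at least two rows. -/
theorem eight_le_card (hU : NoNestedCells v A B) (hA : IsArray v A) (j g : Fin 2 ↪ J)
    (hjg : ∀ i i', j i ≠ g i') (hj : ∀ i, v (j i) = 2)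
    (h2 : ∀ i, ∀ a < v (g i), (cell A B (g i) a).card = 2) : 8 ≤ B.card := by
  have hbin : ∀ r i, A r (j i) < 2 := fun r i => (hA r (j i)).trans_eq (hj i)
  have mem_quadrant : ∀ {r a b}, r ∈ cell A (cell A B (j 0) a) (j 1) b ↔
      r ∈ B ∧ A r (j 0) = a ∧ A r (j 1) = b := by
    simp [cell, and_assoc]
  have hnonempty : ∀ a < 2, ∀ b < 2, (cell A (cell A B (j 0) a) (j 1) b).Nonempty := by
    intro a ha b hb
    by_contra hempty
    refine j.injective.ne zero_ne_one
      (hU (a := a) (b := 1 - b) (by rw [hj 0]; exact ha) (by rw [hj 1]; omega) fun r hr => ?_).1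
    have hrb : A r (j 1) ≠ b := fun h =>
      hempty ⟨r, mem_quadrant.2 ⟨cell_subset hr, (mem_filter.1 hr).2, h⟩⟩
    exact mem_filter.2 ⟨cell_subset hr, by have := hbin r 1; omega⟩
  have htwo : ∀ a < 2, ∀ b < 2, 2 ≤ (cell A (cell A B (j 0) a) (j 1) b).card := by
    intro a ha b hb
    obtain ⟨r, hr⟩ := hnonempty (1 - a) (by omega) (1 - b) (by omega)
    obtain ⟨hrB, hr₀, hr₁⟩ := mem_quadrant.1 hr
    obtain ⟨P, hPB, hP, hPne⟩ :=
      hU.exists_two_le_card_forall_ne hA (g.injective.ne zero_ne_one) (h2 0) (h2 1) hrB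
    refine hP.trans (card_le_card fun r' hr' => mem_quadrant.2 ⟨hPB hr', ?_, ?_⟩)
    · have := hPne r' hr' (j 0) (hjg 0 0) (hjg 0 1)
      have := hbin r' 0
      omega
    · have := hPne r' hr' (j 1) (hjg 1 0) (hjg 1 1)
      have := hbin r' 1
      omega
  have hB := hA.card_eq_sum_card_cell B (j 0)
  rw [hj 0, sum_range_succ, sum_range_succ, sum_range_zero, zero_add,
    hA.card_eq_sum_card_cell (cell A B (j 0) 0) (j 1),
    hA.card_eq_sum_card_cell (cell A B (j 0) 1) (j 1), hj 1] at hB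
  simp only [sum_range_succ, sum_range_zero, zero_add] at hB
  have := htwo 0 (by norm_num) 0 (by norm_num)
  have := htwo 0 (by norm_num) 1 (by norm_num)
  have := htwo 1 (by norm_num) 0 (by norm_num)
  have := htwo 1 (by norm_num) 1 (by norm_num)
  omega

end NoNestedCells

end Cells

section MixedLevels

variable {u k w : ℕ}

def mixedLevels (u k w : ℕ) (j : Fin (u + k + 1)) : ℕ :=
  if (j : ℕ) < u then 2 else if (j : ℕ) < u + k then 3 else w

def binaryCols (k : ℕ) {n : ℕ} (h : n ≤ u) : Fin n ↪ Fin (u + k) :=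
  (Fin.castLEEmb h).trans (Fin.castAddEmb k)

def ternaryCols (u : ℕ) {n : ℕ} (h : n ≤ k) : Fin n ↪ Fin (u + k) :=
  (Fin.castLEEmb h).trans (Fin.natAddEmb u)

@[simp] lemma mixedLevels_binaryCols {n : ℕ} (h : n ≤ u) (i : Fin n) :
    mixedLevels u k w (binaryCols k h i).castSucc = 2 := by
  simp [mixedLevels, binaryCols]
  omega

@[simp] lemma mixedLevels_ternaryCols {n : ℕ} (h : n ≤ k) (i : Fin n) :
    mixedLevels u k w (ternaryCols u h i).castSucc = 3 := by
  simp [mixedLevels, ternaryCols]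
  omega

@[simp] lemma mixedLevels_last : mixedLevels u k w (Fin.last (u + k)) = w := by
  simp [mixedLevels]

lemma binaryCols_ne_ternaryCols {n n' : ℕ} (h : n ≤ u) (h' : n' ≤ k) (i : Fin n) (i' : Fin n') :
    binaryCols k h i ≠ ternaryCols u h' i' := by
  simp [binaryCols, ternaryCols, Fin.ext_iff]
  omega

lemma mixedLevels_pos (hw : 0 < w) (j : Fin (u + k + 1)) : 0 < mixedLevels u k w j := by
  unfold mixedLevels
  split_ifs <;> omega

variable {R : Type*} [Fintype R] [DecidableEq R] {A : R → Fin (u + k + 1) → ℕ}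

lemma IsDTA.mixedLevels_noNestedCells (hA : IsDTA (mixedLevels u k w) 1 2 A) (hw : 0 < w) :
    NoNestedCells (fun j : Fin (u + k) => mixedLevels u k w j.castSucc)
      (fun r j => A r j.castSucc) (rho A {(Fin.last (u + k), 0)}) :=
  hA.noNestedCells (Fin.castSucc_injective _) Fin.castSucc_ne_last (by simpa using hw)

lemma IsDTA.mixedLevels_card_cell (hA : IsDTA (mixedLevels u k w) 1 2 A)
    (hku : 3 ≤ u + k + 1) (hw : 0 < w) {j : Fin (u + k)}
    (hR : Fintype.card R = 2 * (mixedLevels u k w j.castSucc * w)) {a : ℕ}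
    (ha : a < mixedLevels u k w j.castSucc) :
    (cell (fun r j => A r j.castSucc) (rho A {(Fin.last (u + k), 0)}) j a).card = 2 :=
  hA.card_cell_eq_two (by simpa using hku) (mixedLevels_pos hw) (Fin.castSucc_ne_last j)
    (by rwa [mixedLevels_last]) ha

theorem IsDTA.mixedLevels_bounds_of_card_eq (hA : IsDTA (mixedLevels u k w) 1 2 A)
    (hku : 3 ≤ u + k + 1) (hw : 0 < w) (hk : 1 ≤ k) (hR : Fintype.card R = 6 * w) :
    (u < 2 ∨ k < 2) ∧ (k = 1 → u ≤ 4) ∧ (u = 0 → k ≤ 5) ∧ (u = 1 → k ≤ 3) := by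
  have hU := hA.mixedLevels_noNestedCells hw
  have hA' : IsArray _ (fun r (j : Fin (u + k)) => A r j.castSucc) := fun r j => hA.1 r _
  have h2 : ∀ {n} (h : n ≤ k) (i : Fin n), ∀ a < 3,
      (cell (fun r j => A r j.castSucc) (rho A {(Fin.last (u + k), 0)}) (ternaryCols u h i) a).card
        = 2 := fun h i a ha =>
    hA.mixedLevels_card_cell hku hw (by simp [hR]; ring) (by simpa using ha)
  have hB := hA'.card_eq_two_mul (j := ternaryCols u hk 0) (by simpa using h2 hk 0)
  simp only [mixedLevels_ternaryCols] at hB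
  refine ⟨?_, fun hk1 => ?_, fun hu => ?_, fun hu => ?_⟩
  · by_contra! h
    have := hU.eight_le_card hA' (binaryCols k h.1) (ternaryCols u h.2)
      (binaryCols_ne_ternaryCols _ _) (by simp) (by simpa using h2 h.2)
    omega
  · by_contra! hu
    have := hU.card_mul_two_le_two_pow hA' (by simp) (h2 hk 0) (binaryCols k hu)
      (fun i => binaryCols_ne_ternaryCols _ _ _ _) (by simp)
    simp at this
  · by_contra! hk6
    have := hU.card_mul_le_choose (ternaryCols u hk6) (by simp) (h2 hk6)
    rw [hB] at this
    simp [Nat.choose] at this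
  · by_contra! hk4
    have := hU.four_mul_card_mul_le_sq hA' (j₀ := binaryCols k hu.ge 0) (by simp)
      (ternaryCols u hk4) (fun i => (binaryCols_ne_ternaryCols _ _ _ _).symm) (by simp) (h2 hk4)
    rw [hB] at this
    simp at this

theorem IsDTA.mixedLevels_le_three_of_card_eq (hA : IsDTA (mixedLevels u k w) 1 2 A)
    (hku : 3 ≤ u + k + 1) (hw : 0 < w) (hu : 2 ≤ u) (hR : Fintype.card R = 4 * w) : u ≤ 3 := by
  have hU := hA.mixedLevels_noNestedCells hw
  have hA' : IsArray _ (fun r (j : Fin (u + k)) => A r j.castSucc) := fun r j => hA.1 r _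
  have h2 : ∀ {n} (h : n ≤ u) (i : Fin n), ∀ a < 2,
      (cell (fun r j => A r j.castSucc) (rho A {(Fin.last (u + k), 0)}) (binaryCols k h i) a).card
        = 2 := fun h i a ha =>
    hA.mixedLevels_card_cell hku hw (by simp [hR]; ring) (by simpa using ha)
  have hB := hA'.card_eq_two_mul (j := binaryCols k hu 0) (by simpa using h2 hu 0)
  simp only [mixedLevels_binaryCols] at hB
  by_contra! hu4
  have := hU.card_mul_le_choose (binaryCols k hu4) (by simp) (h2 hu4)
  rw [hB] at this
  simp [Nat.choose] at this

end MixedLevels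

/-- Lemma: necessary conditions for an optimum
`(1,2)`-DTA(`N`; 1+k+u, `2^u 3^k w^1`) meeting the lower bound, where `N = 6w`
if `k ≥ 1` and `N = 4w` if `k = 0`. -/
theorem stmt_11 {u k w : ℕ} (hw : 3 ≤ w) (hku : 3 ≤ 1 + k + u)
    (h : ∃ A : Fin (if 1 ≤ k then 6 * w else 4 * w) → Fin (u + k + 1) → ℕ,
      IsDTA
        (fun j : Fin (u + k + 1) =>
          if (j : ℕ) < u then 2 else if (j : ℕ) < u + k then 3 else w)
        1 2 A) :
    (u < 2 ∨ k < 2) ∧ (k = 0 → u ≤ 3) ∧ (k = 1 → u ≤ 4) ∧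
      (u = 0 → k ≤ 5) ∧ (u = 1 → k ≤ 3) := by
  obtain ⟨A, hA⟩ := h
  replace hA : IsDTA (mixedLevels u k w) 1 2 A := hA
  rcases Nat.eq_zero_or_pos k with rfl | hk
  · have := hA.mixedLevels_le_three_of_card_eq (by omega) (by omega) (by omega) (by simp)
    omega
  · obtain ⟨h₁, h₃, h₄, h₅⟩ := hA.mixedLevels_bounds_of_card_eq (by omega) (by omega) hk
      (by rw [Fintype.card_fin, if_pos (show 1 ≤ k from hk)])
    exact ⟨h₁, by omega, h₃, h₄, h₅⟩
end

section
/- Let t < k be positive integers, 2 ≤ v_1 ≤ ⋯ ≤ v_k and 2 ≤ u_1 ≤ ⋯ ≤ u_k, and let d_1 < v_1 and d_2 < u_1 be nonnegative integers. Suppose A is a super-simple MCA_{d_1+1}(N_1; t, k, (v_1,…,v_k)) of optimum size N_1 = (d_1+1)·∏_{i=k−t+1}^k v_i and B is a super-simple MCA_{d_2+1}(N_2; t, k, (u_1,…,u_k)) of optimum size N_2 = (d_2+1)·∏_{i=k−t+1}^k u_i. Then the Kronecker product A⊗B is a (d,t)-DTA(N_1N_2; k, (v_1u_1, v_2u_2,…,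 v_ku_k)) of optimum size N_1N_2 meeting the lower bound (d+1)·∏_{i=k−t+1}^k v_iu_i, where d = (d_1+1)(d_2+1)−1. -/
lemma mem_rho {R J : Type*} [Fintype R] {A : R → J → ℕ} {T : Finset (J × ℕ)} {r : R} :
    r ∈ rho A T ↔ ∀ p ∈ T, A r p.1 = p.2 := by
  simp [rho]

lemma rho_kron {R1 R2 J : Type*} [Fintype R1] [Fintype R2] [DecidableEq J]
    (u : J → ℕ) (A : R1 → J → ℕ) (B : R2 → J → ℕ)
    (hu : ∀ j, 0 < u j) (hB : IsArray u B) (T : Finset (J × ℕ)) :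
    rho (fun (p : R1 × R2) (j : J) => A p.1 j * u j + B p.2 j) T
      = (rho A (T.image fun p => (p.1, p.2 / u p.1))) ×ˢ
          (rho B (T.image fun p => (p.1, p.2 % u p.1))) := by
  ext ⟨i, r⟩
  simp only [Finset.mem_product, mem_rho, Finset.mem_image]
  constructor
  · intro h
    refine ⟨?_, ?_⟩
    · rintro q ⟨p, hp, rfl⟩
      have e := h p hp
      rw [← e, add_comm, Nat.add_mul_div_right _ _ (hu p.1),
        Nat.div_eq_of_lt (hB r p.1), zero_add]
    · rintro q ⟨p, hp, rfl⟩
      have e := h p hp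
      rw [← e, add_comm, Nat.add_mul_mod_self_right, Nat.mod_eq_of_lt (hB r p.1)]
  · intro h p hp
    have e1 := h.1 (p.1, p.2 / u p.1) ⟨p, hp, rfl⟩
    have e2 := h.2 (p.1, p.2 % u p.1) ⟨p, hp, rfl⟩
    rw [e1, e2]
    exact Nat.div_add_mod' p.2 (u p.1)

lemma interaction_image {J : Type*} [DecidableEq J]
    (v u : J → ℕ) (hu : ∀ j, 0 < u j) {s : ℕ} {T : Finset (J × ℕ)}
    (hT : IsInteraction (fun j => v j * u j) s T) :
    IsInteraction v s (T.image fun p => (p.1, p.2 / u p.1)) ∧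
      IsInteraction u s (T.image fun p => (p.1, p.2 % u p.1)) := by
  obtain ⟨h1, h2, h3⟩ := hT
  have key : ∀ f : J × ℕ → J × ℕ, (∀ p, (f p).1 = p.1) →
      (T.image f).card = s ∧ ((T.image f).image Prod.fst).card = s := by
    intro f hf
    have himg : (T.image f).image Prod.fst = T.image Prod.fst := by
      rw [Finset.image_image]
      congr 1
      exact funext hf
    refine ⟨le_antisymm (h1 ▸ Finset.card_image_le) ?_, by rw [himg, h2]⟩
    calc s = ((T.image f).image Prod.fst).card := by rw [himg, h2]
      _ ≤ (T.image f).card := Finset.card_image_le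
  constructor
  · obtain ⟨c1, c2⟩ := key (fun p => (p.1, p.2 / u p.1)) (fun p => rfl)
    refine ⟨c1, c2, ?_⟩
    rintro q hq
    obtain ⟨p, hp, rfl⟩ := Finset.mem_image.mp hq
    exact (Nat.div_lt_iff_lt_mul (hu p.1)).mpr (h3 p hp)
  · obtain ⟨c1, c2⟩ := key (fun p => (p.1, p.2 % u p.1)) (fun p => rfl)
    refine ⟨c1, c2, ?_⟩
    rintro q hq
    obtain ⟨p, hp, rfl⟩ := Finset.mem_image.mp hq
    exact Nat.mod_lt _ (hu p.1)

lemma card_inter_le_one {R J : Type*} [Fintype R] [DecidableEq R] [DecidableEq J]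
    {w : J → ℕ} {t : ℕ} {C : R → J → ℕ}
    (hss : ∀ S : Finset (J × ℕ), IsInteraction w (t + 1) S → (rho C S).card ≤ 1)
    {T T' : Finset (J × ℕ)} (hT : IsInteraction w t T) (hT' : IsInteraction w t T')
    (hne : T' ≠ T) : (rho C T ∩ rho C T').card ≤ 1 := by
  by_cases hsub : T'.image Prod.fst ⊆ T.image Prod.fst
  · have hcols : T'.image Prod.fst = T.image Prod.fst :=
      Finset.eq_of_subset_of_card_le hsub (by rw [hT.2.1, hT'.2.1])
    have hTT' : ¬ T' ⊆ T := fun h =>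
      hne (Finset.eq_of_subset_of_card_le h (by rw [hT.1, hT'.1]))
    obtain ⟨p, hpT', hpT⟩ := Finset.not_subset.mp hTT'
    have hp1 : p.1 ∈ T.image Prod.fst := hcols ▸ Finset.mem_image_of_mem Prod.fst hpT'
    obtain ⟨q, hqT, hq1⟩ := Finset.mem_image.mp hp1
    have hq2 : q.2 ≠ p.2 := by
      intro h
      exact hpT (by rwa [show p = q from (Prod.ext hq1 h).symm])
    have hempty : rho C T ∩ rho C T' = ∅ := by
      ext r
      simp only [Finset.mem_inter, mem_rho, Finset.notMem_empty, iff_false, not_and]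
      intro h1 h2
      have e1 := h1 q hqT
      have e2 := h2 p hpT'
      rw [hq1] at e1
      exact hq2 (by rw [← e1, e2])
    rw [hempty]
    simp
  · obtain ⟨j, hjT', hjT⟩ := Finset.not_subset.mp hsub
    obtain ⟨p, hpT', hp1⟩ := Finset.mem_image.mp hjT'
    subst hp1
    have hpnotT : p ∉ T := fun h => hjT (Finset.mem_image_of_mem _ h)
    have hint : IsInteraction w (t + 1) (insert p T) := by
      refine ⟨?_, ?_, ?_⟩
      · rw [Finset.card_insert_of_notMem hpnotT, hT.1]
      · rw [Finset.image_insert, Finset.card_insert_of_notMem hjT, hT.2.1]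
      · intro q hq
        rcases Finset.mem_insert.mp hq with h | h
        · rw [h]
          exact hT'.2.2 p hpT'
        · exact hT.2.2 q h
    have hsub2 : rho C T ∩ rho C T' ⊆ rho C (insert p T) := by
      intro r hr
      rw [Finset.mem_inter, mem_rho, mem_rho] at hr
      rw [mem_rho]
      intro q hq
      rcases Finset.mem_insert.mp hq with h | h
      · rw [h]
        exact hr.2 p hpT'
      · exact hr.1 q h
    exact le_trans (Finset.card_le_card hsub2) (hss _ hint)

/-- Theorem: the Kronecker product of two super-simple optimum
MCAs is an optimum `(d,t)`-DTA with `d = (d₁+1)(d₂+1) - 1`, of size `N₁N₂`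
meeting the lower bound `(d+1)·∏_{i=k-t+1}^k v_i u_i`. The row indexed by
`(i, r)` has in column `j` the pair `(A i j, B r j)`, identified with the
element `A i j * u j + B r j` of `Z_{v_j u_j}`. -/
theorem stmt_12 {t k d1 d2 N1 N2 : ℕ} (ht : 0 < t) (hk : 0 < k) (htk : t < k)
    (v u : Fin k → ℕ) (hmv : Monotone v) (hmu : Monotone u)
    (hv2 : 2 ≤ v ⟨0, hk⟩) (hu2 : 2 ≤ u ⟨0, hk⟩)
    (hd1 : d1 < v ⟨0, hk⟩) (hd2 : d2 < u ⟨0, hk⟩)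
    (hN1 : N1 = (d1 + 1) * ∏ i ∈ Finset.univ.filter (fun i : Fin k => k - t ≤ (i : ℕ)), v i)
    (hN2 : N2 = (d2 + 1) * ∏ i ∈ Finset.univ.filter (fun i : Fin k => k - t ≤ (i : ℕ)), u i)
    (A : Fin N1 → Fin k → ℕ) (B : Fin N2 → Fin k → ℕ)
    (hA : IsMCA v (d1 + 1) t A ∧ IsSuperSimple v t A)
    (hB : IsMCA u (d2 + 1) t B ∧ IsSuperSimple u t B) :
    IsDTA (fun j => v j * u j) ((d1 + 1) * (d2 + 1) - 1) t
        (fun (p : Fin N1 × Fin N2) (j : Fin k) => A p.1 j * u j + B p.2 j) ∧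
      N1 * N2 =
        ((d1 + 1) * (d2 + 1)) *
          ∏ i ∈ Finset.univ.filter (fun i : Fin k => k - t ≤ (i : ℕ)), v i * u i := by
  obtain ⟨⟨hAarr, hAmca⟩, hAss⟩ := hA
  obtain ⟨⟨hBarr, hBmca⟩, hBss⟩ := hB
  have hu0 : ∀ j, 0 < u j := fun j =>
    lt_of_lt_of_le (by norm_num) (le_trans hu2 (hmu (by simp [Fin.le_def])))
  set C : Fin N1 × Fin N2 → Fin k → ℕ := fun p j => A p.1 j * u j + B p.2 j with hC
  have hCarr : IsArray (fun j => v j * u j) C := by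
    intro p j
    have h1 := hAarr p.1 j
    have h2 := hBarr p.2 j
    calc A p.1 j * u j + B p.2 j < A p.1 j * u j + u j := by omega
      _ = (A p.1 j + 1) * u j := by ring
      _ ≤ v j * u j := Nat.mul_le_mul_right _ h1
  have hrho : ∀ T, rho C T = (rho A (T.image fun p => (p.1, p.2 / u p.1))) ×ˢ
      (rho B (T.image fun p => (p.1, p.2 % u p.1))) := rho_kron u A B hu0 hBarr
  have hssC : ∀ S : Finset (Fin k × ℕ), IsInteraction (fun j => v j * u j) (t + 1) S →
      (rho C S).card ≤ 1 := by
    intro S hS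
    obtain ⟨hSA, hSB⟩ := interaction_image v u hu0 hS
    rw [hrho, Finset.card_product]
    exact mul_le_one' (hAss _ hSA) (hBss _ hSB)
  have hmcaC : ∀ T : Finset (Fin k × ℕ), IsInteraction (fun j => v j * u j) t T →
      (d1 + 1) * (d2 + 1) ≤ (rho C T).card := by
    intro T hT
    obtain ⟨hTA, hTB⟩ := interaction_image v u hu0 hT
    rw [hrho, Finset.card_product]
    exact Nat.mul_le_mul (hAmca _ hTA) (hBmca _ hTB)
  refine ⟨⟨hCarr, ?_⟩, ?_⟩
  · intro T hT Ts hcard hTs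
    constructor
    · intro hsub
      by_contra hTnot
      have hsub' : rho C T ⊆ Ts.sup (rho C) := hsub
      have h1 : rho C T ⊆ Ts.biUnion fun T' => rho C T ∩ rho C T' := by
        intro x hx
        obtain ⟨T', hT'mem, hxT'⟩ := Finset.mem_sup.mp (hsub' hx)
        exact Finset.mem_biUnion.mpr ⟨T', hT'mem, Finset.mem_inter.mpr ⟨hx, hxT'⟩⟩
      have h2 : (rho C T).card ≤ Ts.card := by
        refine le_trans (Finset.card_le_card h1) (le_trans Finset.card_biUnion_le ?_)
        calc ∑ T' ∈ Ts, (rho C T ∩ rho C T').card ≤ ∑ T' ∈ Ts, 1 :=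
            Finset.sum_le_sum fun T' hT'mem =>
              card_inter_le_one hssC hT (hTs T' hT'mem) fun h => hTnot (h ▸ hT'mem)
          _ = Ts.card := by simp
      have h3 := hmcaC T hT
      rw [hcard] at h2
      have h4 : 0 < (d1 + 1) * (d2 + 1) := Nat.mul_pos (Nat.succ_pos d1) (Nat.succ_pos d2)
      omega
    · intro hmem
      exact (Finset.le_sup hmem : rho C T ≤ Ts.sup (rho C))
  · rw [hN1, hN2, Finset.prod_mul_distrib]
    ring
end

section
/- Let t < k be positive integers, 2 ≤ v_1 ≤ ⋯ ≤ v_k, and let d < v_1 be a nonnegative integer. Suppose there exists a super-simple MCA_{d+1}(N; t, k, (v_1,…,v_k)) of optimum size N = (d+1)·∏_{i=k−t+1}^k v_i, and suppose an orthogonal array OA(t, k, m) exists for some integer m ≥ 2. Then there exists a (d,t)-DTA(m^t·N; k, (mv_1, mv_2,…, mv_k)) of optimum size m^t·N meeting the lower bound (d+1)·∏_{i=k−t+1}^k (m v_i). -/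
section AuxDTA

open Finset

variable {R R' J : Type*} [Fintype R] [Fintype R'] [DecidableEq R] [DecidableEq R']
  [DecidableEq J]

lemma mem_rho_iff {A : R → J → ℕ} {T : Finset (J × ℕ)} {r : R} :
    r ∈ rho A T ↔ ∀ p ∈ T, A r p.1 = p.2 := by
  simp [rho]

lemma mem_rhoSet_iff {A : R → J → ℕ} {Ts : Finset (Finset (J × ℕ))} {r : R} :
    r ∈ rhoSet A Ts ↔ ∃ T ∈ Ts, r ∈ rho A T := Finset.mem_sup

lemma interaction_injOn {v : J → ℕ} {s : ℕ} {T : Finset (J × ℕ)}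
    (hT : IsInteraction v s T) : Set.InjOn Prod.fst (T : Set (J × ℕ)) :=
  Finset.injOn_of_card_image_eq (by rw [hT.2.1, hT.1])

lemma eq_of_mem_of_fst_eq {v : J → ℕ} {s : ℕ} {T : Finset (J × ℕ)}
    (hT : IsInteraction v s T) {p q : J × ℕ} (hp : p ∈ T) (hq : q ∈ T)
    (h : p.1 = q.1) : p = q :=
  interaction_injOn hT hp hq h

/-- Map the values of an interaction column-wise. -/
def mapVals (v : J → ℕ) (f : ℕ → ℕ → ℕ) (T : Finset (J × ℕ)) : Finset (J × ℕ) :=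
  T.image fun p => (p.1, f (v p.1) p.2)

lemma mem_mapVals {v : J → ℕ} {f : ℕ → ℕ → ℕ} {T : Finset (J × ℕ)} {q : J × ℕ} :
    q ∈ mapVals v f T ↔ ∃ p ∈ T, p.1 = q.1 ∧ f (v p.1) p.2 = q.2 := by
  simp [mapVals, Prod.ext_iff]

lemma mem_mapVals_of_mem {v : J → ℕ} {f : ℕ → ℕ → ℕ} {T : Finset (J × ℕ)} {p : J × ℕ}
    (hp : p ∈ T) : (p.1, f (v p.1) p.2) ∈ mapVals v f T :=
  mem_mapVals.mpr ⟨p, hp, rfl, rfl⟩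

lemma mapVals_fst_image (v : J → ℕ) (f : ℕ → ℕ → ℕ) (T : Finset (J × ℕ)) :
    (mapVals v f T).image Prod.fst = T.image Prod.fst := by
  simp only [mapVals, Finset.image_image]
  exact Finset.image_congr fun p _ => rfl

lemma mapVals_interaction {v w u : J → ℕ} {s : ℕ} {T : Finset (J × ℕ)}
    (hT : IsInteraction v s T) {f : ℕ → ℕ → ℕ}
    (hf : ∀ p ∈ T, f (u p.1) p.2 < w p.1) :
    IsInteraction w s (mapVals u f T) := by
  have hinj : Set.InjOn (fun p : J × ℕ => (p.1, f (u p.1) p.2)) (T : Set (J × ℕ)) := by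
    intro p hp q hq h
    exact eq_of_mem_of_fst_eq hT hp hq (by simpa using congrArg Prod.fst h)
  refine ⟨?_, ?_, ?_⟩
  · show (T.image _).card = s
    rw [Finset.card_image_of_injOn hinj, hT.1]
  · rw [mapVals_fst_image, hT.2.1]
  · intro q hq
    obtain ⟨p, hp, h1, h2⟩ := mem_mapVals.mp hq
    rw [← h2, ← h1]
    exact hf p hp

lemma conflict_rho_inter {B : R → J → ℕ} {S S' : Finset (J × ℕ)} {q q' : J × ℕ}
    (hq : q ∈ S) (hq' : q' ∈ S') (hfst : q.1 = q'.1) (hsnd : q.2 ≠ q'.2) :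
    rho B S ∩ rho B S' = ∅ := by
  ext r
  simp only [Finset.mem_inter, mem_rho_iff, Finset.notMem_empty, iff_false, not_and]
  intro h1 h2
  exact hsnd ((h1 _ hq).symm.trans (hfst ▸ h2 _ hq'))

lemma core_DTA {RD RA : Type*} [Fintype RD] [Fintype RA] [DecidableEq RD] [DecidableEq RA]
    {v : J → ℕ} {m d t : ℕ} (hv : ∀ j, 0 < v j)
    {A : RA → J → ℕ} {D : RD → J → ℕ}
    (hA : IsMCA v (d + 1) t A) (hss : IsSuperSimple v t A)
    (hD : IsOA m 1 t D) :
    IsDTA (fun j => m * v j) d t (fun (p : RD × RA) j => A p.2 j + v j * D p.1 j) := by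
  set C : RD × RA → J → ℕ := fun p j => A p.2 j + v j * D p.1 j with hC
  -- membership characterization
  have hmemC : ∀ (T : Finset (J × ℕ)) (p : RD × RA),
      p ∈ rho C T ↔ p.1 ∈ rho D (mapVals v (fun w σ => σ / w) T) ∧
        p.2 ∈ rho A (mapVals v (fun w σ => σ % w) T) := by
    intro T p
    simp only [mem_rho_iff]
    constructor
    · intro h
      constructor
      · intro q hq
        obtain ⟨x, hx, h1, h2⟩ := mem_mapVals.mp hq
        have hh := h x hx
        rw [← h1, ← h2]
        rw [← hh]
        show D p.1 x.1 = (A p.2 x.1 + v x.1 * D p.1 x.1) / v x.1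
        rw [Nat.add_mul_div_left _ _ (hv x.1), Nat.div_eq_of_lt (hA.1 p.2 x.1), Nat.zero_add]
      · intro q hq
        obtain ⟨x, hx, h1, h2⟩ := mem_mapVals.mp hq
        have hh := h x hx
        rw [← h1, ← h2]
        rw [← hh]
        show A p.2 x.1 = (A p.2 x.1 + v x.1 * D p.1 x.1) % v x.1
        rw [Nat.add_mul_mod_self_left, Nat.mod_eq_of_lt (hA.1 p.2 x.1)]
    · rintro ⟨h1, h2⟩ q hq
      have hd : D p.1 q.1 = q.2 / v q.1 := h1 (q.1, q.2 / v q.1) (mem_mapVals_of_mem hq)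
      have ha : A p.2 q.1 = q.2 % v q.1 := h2 (q.1, q.2 % v q.1) (mem_mapVals_of_mem hq)
      show A p.2 q.1 + v q.1 * D p.1 q.1 = q.2
      rw [ha, hd, Nat.mod_add_div]
  have hprodC : ∀ T : Finset (J × ℕ), rho C T =
      (rho D (mapVals v (fun w σ => σ / w) T)) ×ˢ (rho A (mapVals v (fun w σ => σ % w) T)) := by
    intro T
    ext p
    rw [Finset.mem_product, hmemC]
  -- images are interactions
  have hTAint : ∀ T : Finset (J × ℕ), IsInteraction (fun j => m * v j) t T →
      IsInteraction v t (mapVals v (fun w σ => σ % w) T) :=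
    fun T hT => mapVals_interaction hT fun p _ => Nat.mod_lt _ (hv p.1)
  have hTDint : ∀ T : Finset (J × ℕ), IsInteraction (fun j => m * v j) t T →
      IsInteraction (fun _ : J => m) t (mapVals v (fun w σ => σ / w) T) :=
    fun T hT => mapVals_interaction hT fun p hp =>
      (Nat.div_lt_iff_lt_mul (hv p.1)).mpr (hT.2.2 p hp)
  -- cardinality of rho C T
  have hcardC : ∀ T : Finset (J × ℕ), IsInteraction (fun j => m * v j) t T →
      (rho C T).card = (rho A (mapVals v (fun w σ => σ % w) T)).card := by
    intro T hT
    rw [hprodC, Finset.card_product, hD.2 _ (hTDint T hT), one_mul]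
  -- reconstruction
  have hrecon : ∀ T T' : Finset (J × ℕ), IsInteraction (fun j => m * v j) t T →
      IsInteraction (fun j => m * v j) t T' →
      mapVals v (fun w σ => σ % w) T = mapVals v (fun w σ => σ % w) T' →
      mapVals v (fun w σ => σ / w) T = mapVals v (fun w σ => σ / w) T' → T = T' := by
    intro T T' hT hT' hTA hTD
    apply Finset.eq_of_subset_of_card_le _ (by rw [hT.1, hT'.1])
    intro p hp
    have h1 : (p.1, p.2 % v p.1) ∈ mapVals v (fun w σ => σ % w) T' := by
      rw [← hTA]; exact mem_mapVals_of_mem hp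
    have h2 : (p.1, p.2 / v p.1) ∈ mapVals v (fun w σ => σ / w) T' := by
      rw [← hTD]; exact mem_mapVals_of_mem hp
    obtain ⟨q, hq, hqf, hqs⟩ := mem_mapVals.mp h1
    obtain ⟨q', hq', hqf', hqs'⟩ := mem_mapVals.mp h2
    have hqq : q = q' := eq_of_mem_of_fst_eq hT' hq hq' (hqf.trans hqf'.symm)
    subst hqq
    have : q.2 = p.2 := by
      rw [← Nat.mod_add_div q.2 (v q.1), hqs, hqs', hqf, Nat.mod_add_div]
    have hpq : p = q := Prod.ext hqf.symm this.symm
    rw [hpq]; exact hq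
  -- intersection bound
  have hDle1 : ∀ T T' : Finset (J × ℕ), IsInteraction (fun j => m * v j) t T →
      (rho D (mapVals v (fun w σ => σ / w) T) ∩
        rho D (mapVals v (fun w σ => σ / w) T')).card ≤ 1 := by
    intro T T' hT
    calc (rho D (mapVals v (fun w σ => σ / w) T) ∩
          rho D (mapVals v (fun w σ => σ / w) T')).card
        ≤ (rho D (mapVals v (fun w σ => σ / w) T)).card :=
          Finset.card_le_card Finset.inter_subset_left
      _ = 1 := hD.2 _ (hTDint T hT)
  have hinter : ∀ T T' : Finset (J × ℕ), IsInteraction (fun j => m * v j) t T →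
      IsInteraction (fun j => m * v j) t T' → T ≠ T' →
      (rho C T ∩ rho C T').card ≤ 1 := by
    intro T T' hT hT' hne
    have hsplit : rho C T ∩ rho C T' =
        (rho D (mapVals v (fun w σ => σ / w) T) ∩ rho D (mapVals v (fun w σ => σ / w) T')) ×ˢ
        (rho A (mapVals v (fun w σ => σ % w) T) ∩ rho A (mapVals v (fun w σ => σ % w) T')) := by
      ext p
      simp only [Finset.mem_inter, Finset.mem_product, hmemC]
      tauto
    rw [hsplit, Finset.card_product]
    by_cases hTAeq : mapVals v (fun w σ => σ % w) T = mapVals v (fun w σ => σ % w) T'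
    · -- conflict must be in the D-parts
      have hTDne : mapVals v (fun w σ => σ / w) T ≠ mapVals v (fun w σ => σ / w) T' :=
        fun h => hne (hrecon T T' hT hT' hTAeq h)
      obtain ⟨q, hq, hqn⟩ : ∃ q ∈ mapVals v (fun w σ => σ / w) T,
          q ∉ mapVals v (fun w σ => σ / w) T' := by
        by_contra h
        push_neg at h
        exact hTDne (Finset.eq_of_subset_of_card_le h
          (by rw [(hTDint T hT).1, (hTDint T' hT').1]))
      have hcols : (mapVals v (fun w σ => σ / w) T').image Prod.fst =
          (mapVals v (fun w σ => σ / w) T).image Prod.fst := by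
        rw [mapVals_fst_image, mapVals_fst_image,
          ← mapVals_fst_image v (fun w σ => σ % w) T,
          ← mapVals_fst_image v (fun w σ => σ % w) T', hTAeq]
      have hq1 : q.1 ∈ (mapVals v (fun w σ => σ / w) T').image Prod.fst := by
        rw [hcols]; exact Finset.mem_image_of_mem _ hq
      obtain ⟨q', hq', hfst⟩ := Finset.mem_image.mp hq1
      have hsnd : q.2 ≠ q'.2 := by
        intro h
        exact hqn (by rw [Prod.ext hfst.symm h]; exact hq')
      rw [conflict_rho_inter hq hq' hfst.symm hsnd, Finset.card_empty, Nat.zero_mul]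
      omega
    · by_cases hconf : ∃ q ∈ mapVals v (fun w σ => σ % w) T,
          ∃ q' ∈ mapVals v (fun w σ => σ % w) T', q.1 = q'.1 ∧ q.2 ≠ q'.2
      · obtain ⟨q, hq, q', hq', hfst, hsnd⟩ := hconf
        rw [conflict_rho_inter hq hq' hfst hsnd, Finset.card_empty, Nat.mul_zero]
        omega
      · push_neg at hconf
        obtain ⟨p, hp, hpn⟩ : ∃ p ∈ mapVals v (fun w σ => σ % w) T',
            p ∉ mapVals v (fun w σ => σ % w) T := by
          by_contra h
          push_neg at h
          exact hTAeq (Finset.eq_of_subset_of_card_le h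
            (by rw [(hTAint T hT).1, (hTAint T' hT').1])).symm
        have hcol : ∀ q ∈ mapVals v (fun w σ => σ % w) T, q.1 ≠ p.1 := by
          intro q hq h
          exact hpn (by rw [← Prod.ext h (hconf q hq p hp h)]; exact hq)
        have hins : IsInteraction v (t + 1) (insert p (mapVals v (fun w σ => σ % w) T)) := by
          refine ⟨?_, ?_, ?_⟩
          · rw [Finset.card_insert_of_notMem hpn, (hTAint T hT).1]
          · rw [Finset.image_insert, Finset.card_insert_of_notMem, (hTAint T hT).2.1]
            intro hmem
            obtain ⟨q, hq, hqe⟩ := Finset.mem_image.mp hmem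
            exact hcol q hq hqe
          · intro q hq
            rcases Finset.mem_insert.mp hq with h | h
            · rw [h]; exact (hTAint T' hT').2.2 p hp
            · exact (hTAint T hT).2.2 q h
        have hsub : rho A (mapVals v (fun w σ => σ % w) T) ∩
            rho A (mapVals v (fun w σ => σ % w) T') ⊆
            rho A (insert p (mapVals v (fun w σ => σ % w) T)) := by
          intro r hr
          obtain ⟨h1, h2⟩ := Finset.mem_inter.mp hr
          rw [mem_rho_iff] at h1 h2 ⊢
          intro q hq
          rcases Finset.mem_insert.mp hq with h | h
          · subst h; exact h2 q hp
          · exact h1 q h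
        have hble : (rho A (mapVals v (fun w σ => σ % w) T) ∩
            rho A (mapVals v (fun w σ => σ % w) T')).card ≤ 1 :=
          le_trans (Finset.card_le_card hsub) (hss _ hins)
        calc _ ≤ 1 * 1 := Nat.mul_le_mul (hDle1 T T' hT) hble
          _ = 1 := Nat.one_mul 1
  -- assemble
  constructor
  · intro p j
    have h1 : A p.2 j < v j := hA.1 p.2 j
    have h2 : D p.1 j < m := hD.1 p.1 j
    have h3 : A p.2 j + v j * D p.1 j < v j * (D p.1 j + 1) := by
      rw [Nat.mul_add, Nat.mul_one]; omega
    calc C p j < v j * (D p.1 j + 1) := h3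
      _ ≤ v j * m := Nat.mul_le_mul_left _ h2
      _ = m * v j := Nat.mul_comm _ _
  · intro T hT Ts hTscard hTsint
    constructor
    · intro hsub
      by_contra hTn
      have hbig : d + 1 ≤ (rho C T).card := by
        rw [hcardC T hT]
        exact hA.2 _ (hTAint T hT)
      have hsmall : (rho C T).card ≤ d := by
        have hsub2 : rho C T ⊆ Ts.biUnion (fun T' => rho C T ∩ rho C T') := by
          intro r hr
          obtain ⟨T', hT', hr'⟩ := mem_rhoSet_iff.mp (hsub hr)
          exact Finset.mem_biUnion.mpr ⟨T', hT', Finset.mem_inter.mpr ⟨hr, hr'⟩⟩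
        calc (rho C T).card ≤ (Ts.biUnion (fun T' => rho C T ∩ rho C T')).card :=
              Finset.card_le_card hsub2
          _ ≤ ∑ T' ∈ Ts, (rho C T ∩ rho C T').card := Finset.card_biUnion_le
          _ ≤ ∑ _T' ∈ Ts, 1 := Finset.sum_le_sum fun T' hT' =>
              hinter T T' hT (hTsint T' hT') (fun h => hTn (h ▸ hT'))
          _ = d := by rw [Finset.sum_const, hTscard, smul_eq_mul, Nat.mul_one]
      omega
    · intro hTin r hr
      exact mem_rhoSet_iff.mpr ⟨T, hTin, hr⟩


lemma IsDTA_of_equiv {v : J → ℕ} {d t : ℕ} (e : R ≃ R') {B : R' → J → ℕ}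
    (h : IsDTA v d t B) : IsDTA v d t (fun r => B (e r)) := by
  obtain ⟨harr, hdet⟩ := h
  refine ⟨fun r j => harr (e r) j, ?_⟩
  intro T hT Ts hc hint
  rw [← hdet T hT Ts hc hint]
  have hr : ∀ (S : Finset (J × ℕ)) (r : R),
      r ∈ rho (fun r => B (e r)) S ↔ e r ∈ rho B S := by
    intro S r; simp [rho]
  constructor
  · intro hsub r' hr'
    have h1 : e.symm r' ∈ rho (fun r => B (e r)) T := by
      rw [hr, e.apply_symm_apply]; exact hr'
    obtain ⟨S, hS, hmem⟩ := mem_rhoSet_iff.mp (hsub h1)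
    refine mem_rhoSet_iff.mpr ⟨S, hS, ?_⟩
    rw [hr, e.apply_symm_apply] at hmem
    exact hmem
  · intro hsub r hrr
    obtain ⟨S, hS, hmem⟩ := mem_rhoSet_iff.mp (hsub ((hr T r).mp hrr))
    exact mem_rhoSet_iff.mpr ⟨S, hS, (hr S r).mpr hmem⟩

end AuxDTA

/-- STATEMENT 14 (Corollary: from a super-simple `MCA_{d+1}` of optimum size
`N = (d+1)·∏_{i=k-t+1}^k v_i` and an `OA(t, k, m)`, there is a `(d,t)`-DTA of
optimum size `m^t·N` on levels `(m v_1, …, m v_k)` meeting the lower bound). -/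
theorem stmt_14 {t k d N m : ℕ} (ht : 0 < t) (hk : 0 < k) (htk : t < k)
    (v : Fin k → ℕ) (hmono : Monotone v) (hv2 : 2 ≤ v ⟨0, hk⟩)
    (hdv : d < v ⟨0, hk⟩) (hm : 2 ≤ m)
    (hN : N = (d + 1) * ∏ i ∈ Finset.univ.filter (fun i : Fin k => k - t ≤ (i : ℕ)), v i)
    (hMCA : ∃ A : Fin N → Fin k → ℕ, IsMCA v (d + 1) t A ∧ IsSuperSimple v t A)
    (hOA : ∃ D : Fin (m ^ t) → Fin k → ℕ, IsOA m 1 t D) :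
    ∃ C : Fin (m ^ t * N) → Fin k → ℕ, IsDTA (fun j => m * v j) d t C := by
  obtain ⟨A, hA, hss⟩ := hMCA
  obtain ⟨D, hD⟩ := hOA
  have hv : ∀ j, 0 < v j := fun j =>
    lt_of_lt_of_le (by omega) (le_trans hv2 (hmono (by simp [Fin.le_def])))
  exact ⟨_, IsDTA_of_equiv finProdFinEquiv.symm (core_DTA hv hA hss hD)⟩
end

section
/- For every integer m ≥ 2 there exists a (2^m−1, 2)-DTA(18^m; 4, ((2^m)^1 (3^m)^3)), i.e., a (2^m−1, 2)-detecting array with 18^m rows on four factors, one with 2^m levels and three with 3^m levels, achieving the lower bound 18^m = 2^m·3^m·3^m. -/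
/-!
A detecting array arises from a mixed covering array of index `d + 1` that is super-simple:
if `T ∉ 𝒯`, then `T ∪ T'` involves at least `t + 1` pairs for every `T' ∈ 𝒯`, so each `T'`
shares at most one row with `T`, and the `d` interactions of `𝒯` cannot cover the `d + 1` rows
of `T`. Such an array of type `(2^m, 3^m, 3^m, 3^m)` is the `m`-fold digit-wise product of
the 18-row array with rows `(a, x, y, a + x + y mod 3)`: in it every pair of values in two
columns appears in at least two rows, and any three columns determine the row; the product
multiplies the coverage indices and keeps super-simplicity.
-/

open Finset

section DetectingArrays

variable {R J : Type*} [Fintype R]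

theorem rho_anti (A : R → J → ℕ) {S S' : Finset (J × ℕ)} (h : S ⊆ S') :
    rho A S' ⊆ rho A S :=
  fun _ hr => mem_filter.2 ⟨mem_univ _, fun p hp => (mem_filter.1 hr).2 p (h hp)⟩

theorem card_rho_comp_equiv {R' : Type*} [Fintype R'] (A : R → J → ℕ) (e : R' ≃ R)
    (T : Finset (J × ℕ)) : (rho (fun r => A (e r)) T).card = (rho A T).card :=
  card_equiv e fun r => by simp [rho]

variable [DecidableEq J]

theorem rho_union [DecidableEq R] (A : R → J → ℕ) (S S' : Finset (J × ℕ)) :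
    rho A (S ∪ S') = rho A S ∩ rho A S' := by
  ext r
  simp only [rho, mem_filter, mem_univ, true_and, mem_inter, mem_union, or_imp, forall_and]

theorem IsInteraction.exists_eq_pair {v : J → ℕ} {T : Finset (J × ℕ)}
    (hT : IsInteraction v 2 T) :
    ∃ p q : J × ℕ, p.1 ≠ q.1 ∧ p.2 < v p.1 ∧ q.2 < v q.1 ∧ T = {p, q} := by
  obtain ⟨hcard, hcols, hval⟩ := hT
  obtain ⟨p, q, -, rfl⟩ := card_eq_two.1 hcard
  refine ⟨p, q, fun h => ?_, hval p (by simp), hval q (by simp), rfl⟩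
  simp [h] at hcols

variable {v : J → ℕ} {t : ℕ} {A : R → J → ℕ}

theorem IsSuperSimple.of_agree_imp_eq
    (h : ∀ r s (C : Finset J), C.card = t + 1 → (∀ j ∈ C, A r j = A s j) → r = s) :
    IsSuperSimple v t A := by
  refine fun T hT => card_le_one.2 fun r hr s hs => h r s _ hT.2.1 fun j hj => ?_
  obtain ⟨p, hp, rfl⟩ := mem_image.1 hj
  rw [(mem_filter.1 hr).2 p hp, (mem_filter.1 hs).2 p hp]

theorem IsSuperSimple.card_rho_le_one (hA : IsSuperSimple v t A) {S : Finset (J × ℕ)}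
    (hS : ∀ p ∈ S, p.2 < v p.1) (hcard : t < S.card) : (rho A S).card ≤ 1 := by
  obtain ⟨S', hS'S, hS'card⟩ := exists_subset_card_eq hcard
  refine (card_le_card (rho_anti A hS'S)).trans ?_
  by_cases hinj : Set.InjOn Prod.fst (S' : Set (J × ℕ))
  · exact hA S' ⟨hS'card, by rw [card_image_of_injOn hinj, hS'card],
      fun p hp => hS p (hS'S hp)⟩
  obtain ⟨p, hp, q, hq, hcol, hpq⟩ : ∃ p ∈ S', ∃ q ∈ S', p.1 = q.1 ∧ p ≠ q := by
    simpa [Set.InjOn] using hinj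
  suffices rho A S' = ∅ by simp [this]
  refine eq_empty_of_forall_notMem fun r hr => hpq (Prod.ext hcol ?_)
  rw [← (mem_filter.1 hr).2 p hp, ← (mem_filter.1 hr).2 q hq, hcol]

theorem IsSuperSimple.card_rho_inter_le_one [DecidableEq R]
    (hA : IsSuperSimple v t A) {T T' : Finset (J × ℕ)} (hT : IsInteraction v t T)
    (hT' : IsInteraction v t T') (hne : T ≠ T') : (rho A T ∩ rho A T').card ≤ 1 := by
  rw [← rho_union]
  refine hA.card_rho_le_one (fun p hp => (mem_union.1 hp).elim (hT.2.2 p) (hT'.2.2 p)) ?_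
  by_contra! hle
  have hT_eq : T = T ∪ T' := eq_of_subset_of_card_le subset_union_left (hT.1 ▸ hle)
  exact hne (eq_of_subset_of_card_le (hT_eq ▸ subset_union_right) (by rw [hT.1, hT'.1])).symm

theorem IsDTA.of_isMCA_of_isSuperSimple [DecidableEq R] {d : ℕ} (hcov : IsMCA v (d + 1) t A)
    (hss : IsSuperSimple v t A) : IsDTA v d t A := by
  refine ⟨hcov.1, fun T hT Ts hcard hTs => ⟨fun hsub => ?_, fun hmem => le_sup hmem⟩⟩
  by_contra hT_notMem
  have hsub' : rho A T ⊆ Ts.biUnion fun T' => rho A T ∩ rho A T' := by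
    intro r hr
    obtain ⟨T', hT', hrT'⟩ := mem_biUnion.1 ((sup_eq_biUnion Ts (rho A)).subset (hsub hr))
    exact mem_biUnion.2 ⟨T', hT', mem_inter.2 ⟨hr, hrT'⟩⟩
  have hle : (rho A T).card ≤ d :=
    calc (rho A T).card ≤ (Ts.biUnion fun T' => rho A T ∩ rho A T').card := card_le_card hsub'
      _ ≤ ∑ T' ∈ Ts, (rho A T ∩ rho A T').card := card_biUnion_le
      _ ≤ ∑ _T' ∈ Ts, 1 := sum_le_sum fun T' hT' =>
          hss.card_rho_inter_le_one hT (hTs T' hT') fun h => hT_notMem (h ▸ hT')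
      _ = d := by simp [hcard]
  have := hcov.2 T hT
  omega

theorem IsMCA.comp_equiv {R' : Type*} [Fintype R'] {lam : ℕ} (hA : IsMCA v lam t A) (e : R' ≃ R) :
    IsMCA v lam t fun r => A (e r) :=
  ⟨fun r => hA.1 (e r), fun T hT => card_rho_comp_equiv A e T ▸ hA.2 T hT⟩

theorem IsSuperSimple.comp_equiv {R' : Type*} [Fintype R'] (hA : IsSuperSimple v t A) (e : R' ≃ R) :
    IsSuperSimple v t fun r => A (e r) :=
  fun T hT => card_rho_comp_equiv A e T ▸ hA T hT

end DetectingArrays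

section ProductArray

variable {R J : Type*}

def productArray (w : J → ℕ) (m : ℕ) (B : R → J → ℕ) (r : Fin m → R) (j : J) : ℕ :=
  ∑ i : Fin m, B (r i) j * w j ^ (i : ℕ)

def digitInteraction [DecidableEq J] (w : J → ℕ) (i : ℕ) (T : Finset (J × ℕ)) :
    Finset (J × ℕ) :=
  T.image fun p => (p.1, p.2 / w p.1 ^ i % w p.1)

variable {w : J → ℕ} {m : ℕ} {B : R → J → ℕ}

theorem productArray_eq_finFunctionFinEquiv (hB : IsArray w B) (r : Fin m → R) (j : J) :
    productArray w m B r j =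
      finFunctionFinEquiv fun i => (⟨B (r i) j, hB _ _⟩ : Fin (w j)) := by
  simp [productArray]

theorem IsArray.productArray (hB : IsArray w B) :
    IsArray (fun j => w j ^ m) (productArray w m B) := fun r j => by
  rw [productArray_eq_finFunctionFinEquiv hB]
  exact Fin.isLt _

theorem productArray_eq_iff (hB : IsArray w B) {r : Fin m → R} {j : J} {σ : ℕ}
    (hσ : σ < w j ^ m) :
    productArray w m B r j = σ ↔ ∀ i : Fin m, B (r i) j = σ / w j ^ (i : ℕ) % w j := by
  rw [productArray_eq_finFunctionFinEquiv hB, ← Fin.ext_iff (b := ⟨σ, hσ⟩),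
    ← Equiv.apply_symm_apply finFunctionFinEquiv ⟨σ, hσ⟩, finFunctionFinEquiv.apply_eq_iff_eq,
    funext_iff]
  simp [Fin.ext_iff, finFunctionFinEquiv_symm_apply_val]

theorem rho_productArray [Fintype R] [DecidableEq J] (hB : IsArray w B) {T : Finset (J × ℕ)}
    (hT : ∀ p ∈ T, p.2 < w p.1 ^ m) :
    rho (productArray w m B) T =
      Fintype.piFinset fun i : Fin m => rho B (digitInteraction w i T) := by
  ext r
  simp only [rho, digitInteraction, mem_filter, mem_univ, true_and, Fintype.mem_piFinset,
    forall_mem_image]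
  exact ⟨fun h i p hp => (productArray_eq_iff hB (hT p hp)).1 (h p hp) i,
    fun h p hp => (productArray_eq_iff hB (hT p hp)).2 fun i => h i hp⟩

theorem isInteraction_digitInteraction [DecidableEq J] {s : ℕ} {T : Finset (J × ℕ)}
    (hT : IsInteraction (fun j => w j ^ m) s T) (i : Fin m) :
    IsInteraction w s (digitInteraction w i T) := by
  obtain ⟨hcard, hcols, hval⟩ := hT
  have hcols' : (digitInteraction w i T).image Prod.fst = T.image Prod.fst := by
    simp [digitInteraction, image_image, Function.comp_def]
  refine ⟨le_antisymm (hcard ▸ card_image_le) (hcols ▸ hcols' ▸ card_image_le),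
    hcols' ▸ hcols, ?_⟩
  simp only [digitInteraction, forall_mem_image]
  intro p hp
  refine Nat.mod_lt _ (Nat.pos_of_ne_zero fun h => ?_)
  have := hval p hp
  simp [h, zero_pow i.pos.ne'] at this

theorem IsMCA.productArray [Fintype R] [DecidableEq J] {lam t : ℕ} (hB : IsMCA w lam t B) :
    IsMCA (fun j => w j ^ m) (lam ^ m) t (productArray w m B) := by
  refine ⟨hB.1.productArray, fun T hT => ?_⟩
  rw [rho_productArray hB.1 hT.2.2, Fintype.card_piFinset]
  simpa using pow_card_le_prod univ _ lam fun i _ => hB.2 _ (isInteraction_digitInteraction hT i)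

theorem IsSuperSimple.productArray [Fintype R] [DecidableEq J] {t : ℕ} (hB : IsArray w B)
    (hss : IsSuperSimple w t B) : IsSuperSimple (fun j => w j ^ m) t (productArray w m B) := by
  intro T hT
  rw [rho_productArray hB hT.2.2, Fintype.card_piFinset]
  exact prod_le_one' fun i _ => hss _ (isInteraction_digitInteraction hT i)

end ProductArray

def baseLevels : Fin 4 → ℕ := ![2, 3, 3, 3]

def baseArray (r : Fin 2 × Fin 3 × Fin 3) : Fin 4 → ℕ :=
  ![r.1, r.2.1, r.2.2, (r.1 + r.2.1 + r.2.2 : ℕ) % 3]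

theorem isArray_baseArray : IsArray baseLevels baseArray := by
  unfold IsArray
  decide

theorem isMCA_baseArray : IsMCA baseLevels 2 2 baseArray := by
  refine ⟨isArray_baseArray, fun T hT => ?_⟩
  have hpairs : ∀ j j' : Fin 4, j ≠ j' → ∀ σ < baseLevels j, ∀ σ' < baseLevels j',
      2 ≤ (rho baseArray {(j, σ), (j', σ')}).card := by
    decide
  obtain ⟨⟨j, σ⟩, ⟨j', σ'⟩, hjj', hσ, hσ', rfl⟩ := hT.exists_eq_pair
  exact hpairs j j' hjj' σ hσ σ' hσ'

theorem isSuperSimple_baseArray : IsSuperSimple baseLevels 2 baseArray :=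
  IsSuperSimple.of_agree_imp_eq (by decide)

theorem stmt_15_general (m : ℕ) :
    ∃ A : Fin (18 ^ m) → Fin 4 → ℕ,
      IsDTA (fun j : Fin 4 => if (j : ℕ) = 0 then 2 ^ m else 3 ^ m)
        (2 ^ m - 1) 2 A := by
  have hlevels : (fun j : Fin 4 => if (j : ℕ) = 0 then 2 ^ m else 3 ^ m) =
      fun j => baseLevels j ^ m := by
    funext j
    fin_cases j <;> rfl
  let e : (Fin m → Fin 2 × Fin 3 × Fin 3) ≃ Fin (18 ^ m) :=
    Fintype.equivFinOfCardEq (by simp)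
  refine ⟨fun r => productArray baseLevels m baseArray (e.symm r), hlevels ▸ ?_⟩
  have hcov := (isMCA_baseArray.productArray (m := m)).comp_equiv e.symm
  rw [← Nat.sub_add_cancel (Nat.one_le_two_pow (n := m))] at hcov
  exact IsDTA.of_isMCA_of_isSuperSimple hcov
    ((isSuperSimple_baseArray.productArray isArray_baseArray).comp_equiv e.symm)

/-- Theorem: for every `m ≥ 2` there exists a
`(2^m - 1, 2)`-DTA(`18^m`; 4, `(2^m)^1 (3^m)^3`) achieving the lower bound. -/
theorem stmt_15 (m : ℕ) (hm : 2 ≤ m) :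
    ∃ A : Fin (18 ^ m) → Fin 4 → ℕ,
      IsDTA (fun j : Fin 4 => if (j : ℕ) = 0 then 2 ^ m else 3 ^ m)
        (2 ^ m - 1) 2 A :=
  stmt_15_general m
end

section
/- For every positive integer v with v ∉ {2, 4, 6} there exists a (1,2)-DTA(18v^2; 4, ((2v)^1 (3v)^3)), i.e., a (1,2)-detecting array with 18v^2 rows on four factors, one with 2v levels and three with 3v levels, achieving the lower bound 18v^2 = 2·3v·3v. -/
namespace S16

def phi (v x y : ℕ) : ℕ := (2 * x + y + (if x < v then 1 else 0)) % v

def dta (v r : ℕ) : Fin 4 → ℕ := fun j =>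
  if (j : ℕ) = 0 then (r / (3 * v) / (3 * v)) * v + phi v ((r / (3 * v)) % (3 * v)) (r % (3 * v))
  else if (j : ℕ) = 1 then (r / (3 * v)) % (3 * v)
  else if (j : ℕ) = 2 then r % (3 * v)
  else ((r / (3 * v)) % (3 * v) + r % (3 * v) + r / (3 * v) / (3 * v)) % (3 * v)

def enc (v s x y : ℕ) : ℕ := y + 3 * v * (x + 3 * v * s)

variable {v s x y : ℕ}

lemma dec_y (hy : y < 3 * v) : enc v s x y % (3 * v) = y := by
  unfold enc
  rw [Nat.add_mul_mod_self_left, Nat.mod_eq_of_lt hy]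

lemma dec_q (hv : 0 < v) (hy : y < 3 * v) : enc v s x y / (3 * v) = x + 3 * v * s := by
  unfold enc
  rw [Nat.add_mul_div_left _ _ (by omega : 0 < 3 * v), Nat.div_eq_of_lt hy, zero_add]

lemma dec_x (hv : 0 < v) (hx : x < 3 * v) (hy : y < 3 * v) :
    enc v s x y / (3 * v) % (3 * v) = x := by
  rw [dec_q hv hy, Nat.add_mul_mod_self_left, Nat.mod_eq_of_lt hx]

lemma dec_s (hv : 0 < v) (hx : x < 3 * v) (hy : y < 3 * v) :
    enc v s x y / (3 * v) / (3 * v) = s := by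
  rw [dec_q hv hy, Nat.add_mul_div_left _ _ (by omega : 0 < 3 * v), Nat.div_eq_of_lt hx, zero_add]

lemma enc_lt (hs : s < 2) (hx : x < 3 * v) (hy : y < 3 * v) :
    enc v s x y < 18 * v ^ 2 := by
  unfold enc
  nlinarith [sq_nonneg v]

lemma dta_enc0 (hv : 0 < v) (hx : x < 3 * v) (hy : y < 3 * v) :
    dta v (enc v s x y) 0 = s * v + phi v x y := by
  simp [dta, dec_x hv hx hy, dec_y hy, dec_s hv hx hy]

lemma dta_enc1 (hv : 0 < v) (hx : x < 3 * v) (hy : y < 3 * v) :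
    dta v (enc v s x y) 1 = x := by
  simp [dta, dec_x hv hx hy]

lemma dta_enc2 (hy : y < 3 * v) : dta v (enc v s x y) 2 = y := by
  simp [dta, dec_y hy]

lemma dta_enc3 (hv : 0 < v) (hx : x < 3 * v) (hy : y < 3 * v) :
    dta v (enc v s x y) 3 = (x + y + s) % (3 * v) := by
  have h3 : ((3 : Fin 4) : ℕ) = 3 := rfl
  simp [dta, h3, dec_x hv hx hy, dec_y hy, dec_s hv hx hy]

lemma mod_shift_ne {n c z : ℕ} (hc : 0 < c) (hcn : c < n) : z % n ≠ (z + c) % n := by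
  intro h
  have h2 : n ∣ c := by
    have := (Nat.modEq_iff_dvd' (Nat.le_add_right z c)).mp h
    simpa using this
  exact absurd (Nat.le_of_dvd hc h2) (not_le.mpr hcn)

lemma phi_lt (hv : 0 < v) (x y : ℕ) : phi v x y < v := Nat.mod_lt _ hv

lemma mhelp {m t : ℕ} (E M : ℕ) (ht : t < m) (h : E = t + m * M) : E % m = t := by
  subst h
  rw [Nat.add_mul_mod_self_left, Nat.mod_eq_of_lt ht]

/-- col-0 values with distinct `s` differ. -/
lemma col0_ne (hv : 0 < v) {x1 y1 x2 y2 : ℕ} :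
    0 * v + phi v x1 y1 ≠ 1 * v + phi v x2 y2 := by
  have := phi_lt hv x1 y1
  omega

lemma core12 (hv : 0 < v) {X Y : ℕ} (hX : X < 3 * v) (hY : Y < 3 * v) :
    ∃ r₁ r₂ : ℕ, r₁ < 18 * v ^ 2 ∧ r₂ < 18 * v ^ 2 ∧
      dta v r₁ 1 = X ∧ dta v r₁ 2 = Y ∧ dta v r₂ 1 = X ∧ dta v r₂ 2 = Y ∧
      dta v r₁ 0 ≠ dta v r₂ 0 ∧ dta v r₁ 3 ≠ dta v r₂ 3 := by
  refine ⟨enc v 0 X Y, enc v 1 X Y, enc_lt (by omega) hX hY, enc_lt (by omega) hX hY,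
    dta_enc1 hv hX hY, dta_enc2 hY, dta_enc1 hv hX hY, dta_enc2 hY, ?_, ?_⟩
  · rw [dta_enc0 hv hX hY, dta_enc0 hv hX hY]
    exact col0_ne hv
  · rw [dta_enc3 hv hX hY, dta_enc3 hv hX hY]
    have h := mod_shift_ne (n := 3 * v) (c := 1) (z := X + Y + 0) (by omega) (by omega)
    simpa using h

lemma absorb_mid {m n : ℕ} (h : m ∣ n) (a Z b : ℕ) :
    (a + Z % n + b) % m = (a + Z + b) % m :=
  (((Nat.mod_modEq Z n).of_dvd h).add_left a).add_right b

lemma core13 (hv : 0 < v) {X D : ℕ} (hX : X < 3 * v) (hD : D < 3 * v) :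
    ∃ r₁ r₂ : ℕ, r₁ < 18 * v ^ 2 ∧ r₂ < 18 * v ^ 2 ∧
      dta v r₁ 1 = X ∧ dta v r₁ 3 = D ∧ dta v r₂ 1 = X ∧ dta v r₂ 3 = D ∧
      dta v r₁ 0 ≠ dta v r₂ 0 ∧ dta v r₁ 2 ≠ dta v r₂ 2 := by
  have hn : 0 < 3 * v := by omega
  set Z : ℕ := D + 6 * v - X - 1 with hZ
  set y1 := (Z + 1) % (3 * v) with hy1
  set y2 := Z % (3 * v) with hy2
  have hy1n : y1 < 3 * v := Nat.mod_lt _ hn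
  have hy2n : y2 < 3 * v := Nat.mod_lt _ hn
  refine ⟨enc v 0 X y1, enc v 1 X y2, enc_lt (by omega) hX hy1n, enc_lt (by omega) hX hy2n,
    dta_enc1 hv hX hy1n, ?_, dta_enc1 hv hX hy2n, ?_, ?_, ?_⟩
  · rw [dta_enc3 hv hX hy1n, hy1, absorb_mid dvd_rfl]
    exact mhelp _ 2 hD (by omega)
  · rw [dta_enc3 hv hX hy2n, hy2, absorb_mid dvd_rfl]
    exact mhelp _ 2 hD (by omega)
  · rw [dta_enc0 hv hX hy1n, dta_enc0 hv hX hy2n]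
    exact col0_ne hv
  · rw [dta_enc2 hy1n, dta_enc2 hy2n]
    exact (mod_shift_ne (by omega) (by omega)).symm

lemma core23 (hv : 0 < v) {Y D : ℕ} (hY : Y < 3 * v) (hD : D < 3 * v) :
    ∃ r₁ r₂ : ℕ, r₁ < 18 * v ^ 2 ∧ r₂ < 18 * v ^ 2 ∧
      dta v r₁ 2 = Y ∧ dta v r₁ 3 = D ∧ dta v r₂ 2 = Y ∧ dta v r₂ 3 = D ∧
      dta v r₁ 0 ≠ dta v r₂ 0 ∧ dta v r₁ 1 ≠ dta v r₂ 1 := by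
  have hn : 0 < 3 * v := by omega
  set Z : ℕ := D + 6 * v - Y - 1 with hZ
  set x1 := (Z + 1) % (3 * v) with hx1
  set x2 := Z % (3 * v) with hx2
  have hx1n : x1 < 3 * v := Nat.mod_lt _ hn
  have hx2n : x2 < 3 * v := Nat.mod_lt _ hn
  refine ⟨enc v 0 x1 Y, enc v 1 x2 Y, enc_lt (by omega) hx1n hY, enc_lt (by omega) hx2n hY,
    dta_enc2 hY, ?_, dta_enc2 hY, ?_, ?_, ?_⟩
  · rw [dta_enc3 hv hx1n hY]
    have hcomm : x1 + Y + 0 = Y + x1 + 0 := by ring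
    rw [hcomm, hx1, absorb_mid dvd_rfl]
    exact mhelp _ 2 hD (by omega)
  · rw [dta_enc3 hv hx2n hY]
    have hcomm : x2 + Y + 1 = Y + x2 + 1 := by ring
    rw [hcomm, hx2, absorb_mid dvd_rfl]
    exact mhelp _ 2 hD (by omega)
  · rw [dta_enc0 hv hx1n hY, dta_enc0 hv hx2n hY]
    exact col0_ne hv
  · rw [dta_enc1 hv hx1n hY, dta_enc1 hv hx2n hY]
    exact (mod_shift_ne (by omega) (by omega)).symm


lemma mhelp2 {m t : ℕ} (E M M' : ℕ) (ht : t < m) (h : E + m * M' = t + m * M) : E % m = t := by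
  have h2 : E % m = (E + m * M') % m := by rw [Nat.add_mul_mod_self_left]
  rw [h2, h, Nat.add_mul_mod_self_left, Nat.mod_eq_of_lt ht]

lemma core01 (hv : 0 < v) {s t X : ℕ} (hs : s < 2) (ht : t < v) (hX : X < 3 * v) :
    ∃ r₁ r₂ : ℕ, r₁ < 18 * v ^ 2 ∧ r₂ < 18 * v ^ 2 ∧
      dta v r₁ 0 = s * v + t ∧ dta v r₁ 1 = X ∧ dta v r₂ 0 = s * v + t ∧ dta v r₂ 1 = X ∧
      dta v r₁ 2 ≠ dta v r₂ 2 ∧ dta v r₁ 3 ≠ dta v r₂ 3 := by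
  set d := (if X < v then 1 else 0) with hd
  have hd1 : d ≤ 1 := by rw [hd]; split <;> omega
  have hphi : ∀ yy, phi v X yy = (2 * X + yy + d) % v := by
    intro yy; rw [phi, hd]
  set W : ℕ := t + 6 * v - 2 * X - d with hW
  set y1 := W % v with hy1
  have hy1v : y1 < v := Nat.mod_lt _ hv
  set y2 := y1 + v with hy2
  have hy1n : y1 < 3 * v := by omega
  have hy2n : y2 < 3 * v := by omega
  refine ⟨enc v s X y1, enc v s X y2, enc_lt hs hX hy1n, enc_lt hs hX hy2n,
    ?_, dta_enc1 hv hX hy1n, ?_, dta_enc1 hv hX hy2n, ?_, ?_⟩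
  · rw [dta_enc0 hv hX hy1n, hphi, hy1, absorb_mid dvd_rfl]
    have : (2 * X + W + d) % v = t := mhelp2 _ 6 0 ht (by omega)
    rw [this]
  · rw [dta_enc0 hv hX hy2n, hphi]
    have e : 2 * X + y2 + d = 2 * X + y1 + d + v := by omega
    rw [e, Nat.add_mod_right, hy1, absorb_mid dvd_rfl]
    have : (2 * X + W + d) % v = t := mhelp2 _ 6 0 ht (by omega)
    rw [this]
  · rw [dta_enc2 hy1n, dta_enc2 hy2n]; omega
  · rw [dta_enc3 hv hX hy1n, dta_enc3 hv hX hy2n]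
    have e : X + y2 + s = X + y1 + s + v := by omega
    rw [e]
    exact mod_shift_ne (by omega) (by omega)

lemma core02 (hv : 0 < v) {s t Y : ℕ} (hs : s < 2) (ht : t < v) (hY : Y < 3 * v) :
    ∃ r₁ r₂ : ℕ, r₁ < 18 * v ^ 2 ∧ r₂ < 18 * v ^ 2 ∧
      dta v r₁ 0 = s * v + t ∧ dta v r₁ 2 = Y ∧ dta v r₂ 0 = s * v + t ∧ dta v r₂ 2 = Y ∧
      dta v r₁ 1 ≠ dta v r₂ 1 ∧ dta v r₁ 3 ≠ dta v r₂ 3 := by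
  have hYm : Y % v < v := Nat.mod_lt _ hv
  have eY := Nat.div_add_mod Y v
  set u : ℕ := t + v - Y % v with hu
  have hu1 : 0 < u := by omega
  have hu2 : u < 2 * v := by omega
  obtain ⟨x1, x2, c, hx1n, hx2n, hc0, hcn, hx2e, hp1, hp2⟩ :
      ∃ x1 x2 c : ℕ, x1 < 3 * v ∧ x2 < 3 * v ∧ 0 < c ∧ c < 3 * v ∧ x2 = x1 + c ∧
        phi v x1 Y = t ∧ phi v x2 Y = t := by
    rcases Nat.even_or_odd u with hue | huo
    · -- u even
      have hue2 : u % 2 = 0 := Nat.even_iff.mp hue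
      refine ⟨v + u / 2, v + u / 2 + v, v, by omega, by omega, by omega, by omega, rfl, ?_, ?_⟩
      · rw [phi, if_neg (by omega)]
        exact mhelp2 _ (3 + Y / v) 0 ht
          (by have hB : v * (3 + Y / v) = 3 * v + v * (Y / v) := (by ring); omega)
      · rw [phi, if_neg (by omega)]
        exact mhelp2 _ (5 + Y / v) 0 ht
          (by have hB : v * (5 + Y / v) = 5 * v + v * (Y / v) := (by ring); omega)
    · have huo2 : u % 2 = 1 := Nat.odd_iff.mp huo
      rcases Nat.even_or_odd v with hve | hvo
      · -- u odd, v even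
        have hve2 : v % 2 = 0 := Nat.even_iff.mp hve
        have hw2 : 0 < v / 2 := by omega
        set w : ℕ := ((u - 1) / 2) % (v / 2) with hw
        have hwlt : w < v / 2 := Nat.mod_lt _ hw2
        have ew := Nat.div_add_mod ((u - 1) / 2) (v / 2)
        set q : ℕ := ((u - 1) / 2) / (v / 2) with hq
        have hA : v * q = (v / 2) * q + (v / 2) * q := by
          have h2v : v = v / 2 + v / 2 := by omega
          calc v * q = (v / 2 + v / 2) * q := by rw [← h2v]
            _ = (v / 2) * q + (v / 2) * q := by ring
        refine ⟨w, w + v / 2, v / 2, by omega, by omega, by omega, by omega, rfl, ?_, ?_⟩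
        · rw [phi, if_pos (by omega)]
          exact mhelp2 _ (1 + Y / v) q ht
            (by have hB : v * (1 + Y / v) = v + v * (Y / v) := (by ring); omega)
        · rw [phi, if_pos (by omega)]
          exact mhelp2 _ (2 + Y / v) q ht
            (by have hB : v * (2 + Y / v) = 2 * v + v * (Y / v) := (by ring); omega)
      · -- u odd, v odd
        have hvo2 : v % 2 = 1 := Nat.odd_iff.mp hvo
        have ez := Nat.div_add_mod (u + v) 2
        set z : ℕ := ((u + v) / 2) % v with hz
        have hzlt : z < v := Nat.mod_lt _ hv
        have ez2 := Nat.div_add_mod ((u + v) / 2) v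
        set q : ℕ := ((u + v) / 2) / v with hq
        have hA : v * (2 * q) = 2 * (v * q) := by ring
        refine ⟨v + z, v + z + v, v, by omega, by omega, by omega, by omega, rfl, ?_, ?_⟩
        · rw [phi, if_neg (by omega)]
          exact mhelp2 _ (4 + Y / v) (2 * q) ht
            (by have hB : v * (4 + Y / v) = 4 * v + v * (Y / v) := (by ring); omega)
        · rw [phi, if_neg (by omega)]
          exact mhelp2 _ (6 + Y / v) (2 * q) ht
            (by have hB : v * (6 + Y / v) = 6 * v + v * (Y / v) := (by ring); omega)
  refine ⟨enc v s x1 Y, enc v s x2 Y, enc_lt hs hx1n hY, enc_lt hs hx2n hY,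
    ?_, dta_enc2 hY, ?_, dta_enc2 hY, ?_, ?_⟩
  · rw [dta_enc0 hv hx1n hY, hp1]
  · rw [dta_enc0 hv hx2n hY, hp2]
  · rw [dta_enc1 hv hx1n hY, dta_enc1 hv hx2n hY]; omega
  · rw [dta_enc3 hv hx1n hY, dta_enc3 hv hx2n hY]
    have e : x2 + Y + s = x1 + Y + s + c := by omega
    rw [e]
    exact mod_shift_ne hc0 (by omega)

lemma core03 (hv : 0 < v) {s t D : ℕ} (hs : s < 2) (ht : t < v) (hD : D < 3 * v) :
    ∃ r₁ r₂ : ℕ, r₁ < 18 * v ^ 2 ∧ r₂ < 18 * v ^ 2 ∧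
      dta v r₁ 0 = s * v + t ∧ dta v r₁ 3 = D ∧ dta v r₂ 0 = s * v + t ∧ dta v r₂ 3 = D ∧
      dta v r₁ 1 ≠ dta v r₂ 1 ∧ dta v r₁ 2 ≠ dta v r₂ 2 := by
  set K : ℕ := t + s + 3 * v - D with hK
  have eK := Nat.div_add_mod K v
  set u : ℕ := K % v with hu
  have huv : u < v := Nat.mod_lt _ hv
  set x1 : ℕ := u + v with hx1
  set x2 : ℕ := u + 2 * v with hx2
  have hx1n : x1 < 3 * v := by omega
  have hx2n : x2 < 3 * v := by omega
  set Z1 : ℕ := D + 6 * v - s - x1 with hZ1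
  set Z2 : ℕ := D + 6 * v - s - x2 with hZ2
  set y1 := Z1 % (3 * v) with hy1
  set y2 := Z2 % (3 * v) with hy2
  have hy1n : y1 < 3 * v := Nat.mod_lt _ (by omega)
  have hy2n : y2 < 3 * v := Nat.mod_lt _ (by omega)
  have hvd : v ∣ 3 * v := ⟨3, by ring⟩
  refine ⟨enc v s x1 y1, enc v s x2 y2, enc_lt hs hx1n hy1n, enc_lt hs hx2n hy2n,
    ?_, ?_, ?_, ?_, ?_, ?_⟩
  · rw [dta_enc0 hv hx1n hy1n]
    have hif : ¬ x1 < v := by omega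
    have : phi v x1 y1 = t := by
      rw [phi, if_neg hif, hy1, absorb_mid hvd]
      exact mhelp2 _ 10 (K / v) ht (by omega)
    rw [this]
  · rw [dta_enc3 hv hx1n hy1n, hy1, absorb_mid dvd_rfl]
    exact mhelp2 _ 2 0 hD (by omega)
  · rw [dta_enc0 hv hx2n hy2n]
    have hif : ¬ x2 < v := by omega
    have : phi v x2 y2 = t := by
      rw [phi, if_neg hif, hy2, absorb_mid hvd]
      exact mhelp2 _ 11 (K / v) ht (by omega)
    rw [this]
  · rw [dta_enc3 hv hx2n hy2n, hy2, absorb_mid dvd_rfl]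
    exact mhelp2 _ 2 0 hD (by omega)
  · rw [dta_enc1 hv hx1n hy1n, dta_enc1 hv hx2n hy2n]; omega
  · rw [dta_enc2 hy1n, dta_enc2 hy2n, hy1, hy2]
    have e : Z1 = Z2 + v := by omega
    rw [e]
    exact (mod_shift_ne (by omega) (by omega)).symm


lemma split_a (hv : 0 < v) {a : ℕ} (ha : a < 2 * v) :
    ∃ s t : ℕ, s < 2 ∧ t < v ∧ a = s * v + t := by
  rcases Nat.lt_or_ge a v with h | h
  · exact ⟨0, a, by omega, h, by omega⟩
  · exact ⟨1, a - v, by omega, by omega, by omega⟩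

lemma master (hv : 0 < v) (j1 j2 : Fin 4) (a b : ℕ) (hne : j1 ≠ j2)
    (ha : a < if (j1 : ℕ) = 0 then 2 * v else 3 * v)
    (hb : b < if (j2 : ℕ) = 0 then 2 * v else 3 * v) :
    ∃ r₁ r₂ : ℕ, r₁ < 18 * v ^ 2 ∧ r₂ < 18 * v ^ 2 ∧
      dta v r₁ j1 = a ∧ dta v r₁ j2 = b ∧ dta v r₂ j1 = a ∧ dta v r₂ j2 = b ∧
      ∀ k : Fin 4, k ≠ j1 → k ≠ j2 → dta v r₁ k ≠ dta v r₂ k := by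
  fin_cases j1 <;> fin_cases j2 <;> norm_num at ha hb
  · exact absurd rfl hne
  · -- (0,1)
    obtain ⟨s, t, hs, ht, rfl⟩ := split_a hv ha
    obtain ⟨r₁, r₂, h1, h2, h3, h4, h5, h6, h7, h8⟩ := core01 hv hs ht hb
    refine ⟨r₁, r₂, h1, h2, h3, h4, h5, h6, ?_⟩
    intro k hk1 hk2
    fin_cases k
    · exact absurd rfl hk1
    · exact absurd rfl hk2
    · exact h7
    · exact h8
  · -- (0,2)
    obtain ⟨s, t, hs, ht, rfl⟩ := split_a hv ha
    obtain ⟨r₁, r₂, h1, h2, h3, h4, h5, h6, h7, h8⟩ := core02 hv hs ht hb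
    refine ⟨r₁, r₂, h1, h2, h3, h4, h5, h6, ?_⟩
    intro k hk1 hk2
    fin_cases k
    · exact absurd rfl hk1
    · exact h7
    · exact absurd rfl hk2
    · exact h8
  · -- (0,3)
    obtain ⟨s, t, hs, ht, rfl⟩ := split_a hv ha
    obtain ⟨r₁, r₂, h1, h2, h3, h4, h5, h6, h7, h8⟩ := core03 hv hs ht hb
    refine ⟨r₁, r₂, h1, h2, h3, h4, h5, h6, ?_⟩
    intro k hk1 hk2
    fin_cases k
    · exact absurd rfl hk1
    · exact h7
    · exact h8
    · exact absurd rfl hk2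
  · -- (1,0)
    obtain ⟨s, t, hs, ht, rfl⟩ := split_a hv hb
    obtain ⟨r₁, r₂, h1, h2, h3, h4, h5, h6, h7, h8⟩ := core01 hv hs ht ha
    refine ⟨r₁, r₂, h1, h2, h4, h3, h6, h5, ?_⟩
    intro k hk1 hk2
    fin_cases k
    · exact absurd rfl hk2
    · exact absurd rfl hk1
    · exact h7
    · exact h8
  · exact absurd rfl hne
  · -- (1,2)
    obtain ⟨r₁, r₂, h1, h2, h3, h4, h5, h6, h7, h8⟩ := core12 hv ha hb
    refine ⟨r₁, r₂, h1, h2, h3, h4, h5, h6, ?_⟩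
    intro k hk1 hk2
    fin_cases k
    · exact h7
    · exact absurd rfl hk1
    · exact absurd rfl hk2
    · exact h8
  · -- (1,3)
    obtain ⟨r₁, r₂, h1, h2, h3, h4, h5, h6, h7, h8⟩ := core13 hv ha hb
    refine ⟨r₁, r₂, h1, h2, h3, h4, h5, h6, ?_⟩
    intro k hk1 hk2
    fin_cases k
    · exact h7
    · exact absurd rfl hk1
    · exact h8
    · exact absurd rfl hk2
  · -- (2,0)
    obtain ⟨s, t, hs, ht, rfl⟩ := split_a hv hb
    obtain ⟨r₁, r₂, h1, h2, h3, h4, h5, h6, h7, h8⟩ := core02 hv hs ht ha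
    refine ⟨r₁, r₂, h1, h2, h4, h3, h6, h5, ?_⟩
    intro k hk1 hk2
    fin_cases k
    · exact absurd rfl hk2
    · exact h7
    · exact absurd rfl hk1
    · exact h8
  · -- (2,1)
    obtain ⟨r₁, r₂, h1, h2, h3, h4, h5, h6, h7, h8⟩ := core12 hv hb ha
    refine ⟨r₁, r₂, h1, h2, h4, h3, h6, h5, ?_⟩
    intro k hk1 hk2
    fin_cases k
    · exact h7
    · exact absurd rfl hk2
    · exact absurd rfl hk1
    · exact h8
  · exact absurd rfl hne
  · -- (2,3)
    obtain ⟨r₁, r₂, h1, h2, h3, h4, h5, h6, h7, h8⟩ := core23 hv ha hb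
    refine ⟨r₁, r₂, h1, h2, h3, h4, h5, h6, ?_⟩
    intro k hk1 hk2
    fin_cases k
    · exact h7
    · exact h8
    · exact absurd rfl hk1
    · exact absurd rfl hk2
  · -- (3,0)
    obtain ⟨s, t, hs, ht, rfl⟩ := split_a hv hb
    obtain ⟨r₁, r₂, h1, h2, h3, h4, h5, h6, h7, h8⟩ := core03 hv hs ht ha
    refine ⟨r₁, r₂, h1, h2, h4, h3, h6, h5, ?_⟩
    intro k hk1 hk2
    fin_cases k
    · exact absurd rfl hk2
    · exact h7
    · exact h8
    · exact absurd rfl hk1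
  · -- (3,1)
    obtain ⟨r₁, r₂, h1, h2, h3, h4, h5, h6, h7, h8⟩ := core13 hv hb ha
    refine ⟨r₁, r₂, h1, h2, h4, h3, h6, h5, ?_⟩
    intro k hk1 hk2
    fin_cases k
    · exact h7
    · exact absurd rfl hk2
    · exact h8
    · exact absurd rfl hk1
  · -- (3,2)
    obtain ⟨r₁, r₂, h1, h2, h3, h4, h5, h6, h7, h8⟩ := core23 hv hb ha
    refine ⟨r₁, r₂, h1, h2, h4, h3, h6, h5, ?_⟩
    intro k hk1 hk2
    fin_cases k
    · exact h7
    · exact h8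
    · exact absurd rfl hk2
    · exact absurd rfl hk1
  · exact absurd rfl hne

lemma s_lt (hv : 0 < v) {r : ℕ} (hr : r < 18 * v ^ 2) : r / (3 * v) / (3 * v) < 2 := by
  have h1 : r / (3 * v) < 6 * v := by
    apply Nat.div_lt_of_lt_mul
    nlinarith
  apply Nat.div_lt_of_lt_mul
  omega

lemma dta_lt (hv : 0 < v) {r : ℕ} (hr : r < 18 * v ^ 2) (j : Fin 4) :
    dta v r j < if (j : ℕ) = 0 then 2 * v else 3 * v := by
  have hn : 0 < 3 * v := by omega
  have hs := s_lt hv hr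
  fin_cases j
  · have hp := phi_lt hv ((r / (3 * v)) % (3 * v)) (r % (3 * v))
    simp only [dta]
    norm_num
    obtain ⟨m, hm⟩ : ∃ m, r / (3 * v) / (3 * v) = m := ⟨_, rfl⟩
    rw [hm] at hs ⊢
    rcases (by omega : m = 0 ∨ m = 1) with h | h <;> rw [h] <;> omega
  · simpa [dta] using Nat.mod_lt (r / (3 * v)) hn
  · simpa [dta] using Nat.mod_lt r hn
  · have h3 : ((3 : Fin 4) : ℕ) = 3 := rfl
    simpa [dta, h3] using Nat.mod_lt ((r / (3 * v)) % (3 * v) + r % (3 * v) + r / (3 * v) / (3 * v)) hn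



lemma mem_rho_pair {N : ℕ} {A : Fin N → Fin 4 → ℕ} {p q : Fin 4 × ℕ} {r : Fin N} :
    r ∈ rho A {p, q} ↔ A r p.1 = p.2 ∧ A r q.1 = q.2 := by
  simp [rho]

lemma inter_decomp {lev : Fin 4 → ℕ} {T : Finset (Fin 4 × ℕ)}
    (hT : IsInteraction lev 2 T) :
    ∃ p q : Fin 4 × ℕ, p.1 ≠ q.1 ∧ p.2 < lev p.1 ∧ q.2 < lev q.1 ∧ T = {p, q} := by
  obtain ⟨hc, hi, hbnd⟩ := hT
  obtain ⟨p, q, hpq, rfl⟩ := Finset.card_eq_two.mp hc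
  have hne : p.1 ≠ q.1 := by
    intro h
    have himg : ({p, q} : Finset (Fin 4 × ℕ)).image Prod.fst = {q.1} := by
      simp [Finset.image_insert, h]
    rw [himg] at hi
    simp at hi
  exact ⟨p, q, hne, hbnd p (by simp), hbnd q (by simp), rfl⟩

end S16

/-- Theorem: for every positive integer `v ∉ {2, 4, 6}` there
exists a `(1,2)`-DTA(`18v²`; 4, `(2v)^1 (3v)^3`) achieving the lower bound. -/
theorem stmt_16 (v : ℕ) (hv : 0 < v) (h2 : v ≠ 2) (h4 : v ≠ 4) (h6 : v ≠ 6) :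
    ∃ A : Fin (18 * v ^ 2) → Fin 4 → ℕ,
      IsDTA (fun j : Fin 4 => if (j : ℕ) = 0 then 2 * v else 3 * v) 1 2 A := by
  classical
  refine ⟨fun r => S16.dta v r.1, ?_, ?_⟩
  · intro r j
    exact S16.dta_lt hv r.2 j
  · intro T hT Ts hcard hTs
    obtain ⟨T', rfl⟩ := Finset.card_eq_one.mp hcard
    obtain ⟨p, q, hpq, hp, hq, rfl⟩ := S16.inter_decomp hT
    rw [rhoSet, Finset.sup_singleton]
    constructor
    · intro hsub
      rw [Finset.mem_singleton]
      by_contra hne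
      have hT'card : T'.card = 2 := (hTs T' (Finset.mem_singleton_self T')).1
      have hnsub : ¬ T' ⊆ {p, q} := by
        intro hss
        exact hne
          (Finset.eq_of_subset_of_card_le hss (le_of_eq (hT.1.trans hT'card.symm))).symm
      obtain ⟨e, heT', heT⟩ := Finset.not_subset.mp hnsub
      obtain ⟨r₁, r₂, hr₁, hr₂, h11, h12, h21, h22, hk⟩ :=
        S16.master hv p.1 q.1 p.2 q.2 hpq hp hq
      have hm1 : (⟨r₁, hr₁⟩ : Fin (18 * v ^ 2)) ∈
          rho (fun r : Fin (18 * v ^ 2) => S16.dta v r.1) {p, q} :=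
        S16.mem_rho_pair.mpr ⟨h11, h12⟩
      have hm2 : (⟨r₂, hr₂⟩ : Fin (18 * v ^ 2)) ∈
          rho (fun r : Fin (18 * v ^ 2) => S16.dta v r.1) {p, q} :=
        S16.mem_rho_pair.mpr ⟨h21, h22⟩
      have he1 : S16.dta v r₁ e.1 = e.2 := (Finset.mem_filter.mp (hsub hm1)).2 e heT'
      have he2 : S16.dta v r₂ e.1 = e.2 := (Finset.mem_filter.mp (hsub hm2)).2 e heT'
      by_cases hc1 : e.1 = p.1
      · have hne2 : e.2 ≠ p.2 := by
          intro h22'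
          exact heT (by rw [show e = p from Prod.ext hc1 h22']; simp)
        rw [hc1] at he1
        exact hne2 (he1.symm.trans h11)
      · by_cases hc2 : e.1 = q.1
        · have hne2 : e.2 ≠ q.2 := by
            intro h22'
            exact heT (by rw [show e = q from Prod.ext hc2 h22']; simp)
          rw [hc2] at he1
          exact hne2 (he1.symm.trans h12)
        · exact hk e.1 hc1 hc2 (he1.trans he2.symm)
    · intro hmem
      rw [Finset.mem_singleton] at hmem
      rw [← hmem]
end

section
/- Let t ≥ 2 and k > t be positive integers, let v_1,…,v_k be level sizes, and fix an index i with 1 ≤ i ≤ k. Suppose there exist an MCA(N; t, k, (v_1,…,v_i,…,v_k)) (index 1) and an MCA(N′; t−1, k−1, (v_1,…,v_{i−1}, v_{i+1},…,v_k)) (index 1). Then for every positive integer e there exists an MCA(N + e·N′; t, k, (v_1,…,v_{i−1}, v_i+e, v_{i+1},…,v_k)). -/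
/-- STATEMENT 17 (Lemma: from an `MCA(N; t, k, (v_1,…,v_k))` and an
`MCA(N'; t-1, k-1, (v_1,…,v_{i-1},v_{i+1},…,v_k))`, one gets an
`MCA(N + e·N'; t, k, (v_1,…,v_{i-1}, v_i + e, v_{i+1},…,v_k))` for every
positive integer `e`). The `(k-1)`-column array has its columns indexed by
`{j : Fin k // j ≠ i}`. -/
theorem stmt_17 {t k : ℕ} (ht : 2 ≤ t) (htk : t < k)
    (v : Fin k → ℕ) (i : Fin k) {N N' e : ℕ} (he : 0 < e)
    (hA : ∃ A : Fin N → Fin k → ℕ, IsMCA v 1 t A)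
    (hB : ∃ B : Fin N' → {j : Fin k // j ≠ i} → ℕ,
      IsMCA (fun j : {j : Fin k // j ≠ i} => v j.1) 1 (t - 1) B) :
    ∃ C : Fin (N + e * N') → Fin k → ℕ,
      IsMCA (Function.update v i (v i + e)) 1 t C := by
  classical
  obtain ⟨A, hAarr, hAcov⟩ := hA
  obtain ⟨B, hBarr, hBcov⟩ := hB
  set w : Fin k → ℕ := Function.update v i (v i + e) with hw
  have hwi : w i = v i + e := Function.update_self i _ v
  have hwj : ∀ j : Fin k, j ≠ i → w j = v j := fun j hj =>
    Function.update_of_ne hj _ v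
  have hwle : ∀ j : Fin k, v j ≤ w j := by
    intro j
    rcases eq_or_ne j i with rfl | hj
    · rw [hwi]; omega
    · rw [hwj j hj]
  refine ⟨fun r j =>
    if h : (r : ℕ) < N then A ⟨r, h⟩ j
    else if hj : j = i then v i + ((r : ℕ) - N) / N'
    else B ⟨((r : ℕ) - N) % N',
      Nat.mod_lt _ (Nat.pos_of_ne_zero fun hz => h (by simpa [hz] using r.isLt))⟩
      ⟨j, hj⟩, ?_, ?_⟩
  · -- IsArray
    intro r j
    dsimp only
    split_ifs with h hj
    · exact lt_of_lt_of_le (hAarr ⟨r, h⟩ j) (hwle j)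
    · subst hj
      rw [hwi]
      have hdiv : ((r : ℕ) - N) / N' < e := by
        apply Nat.div_lt_of_lt_mul
        have h1 := r.isLt
        have h2 : N' * e = e * N' := Nat.mul_comm _ _
        omega
      omega
    · rw [hwj j hj]
      exact hBarr _ ⟨j, hj⟩
  · -- coverage
    intro T hT
    obtain ⟨hTc, hTf, hTv⟩ := hT
    have hinj : Set.InjOn Prod.fst (T : Set (Fin k × ℕ)) :=
      Finset.injOn_of_card_image_eq (by rw [hTf, hTc])
    by_cases hcase : ∀ p ∈ T, p.2 < v p.1
    · -- covered by A
      have hTA : IsInteraction v t T := ⟨hTc, hTf, hcase⟩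
      obtain ⟨r0, hr0⟩ := Finset.card_pos.mp (hAcov T hTA)
      rw [rho, Finset.mem_filter] at hr0
      have hr0N : (r0 : ℕ) < N + e * N' := by
        have := r0.isLt; omega
      refine Finset.card_pos.mpr ⟨⟨r0, hr0N⟩, ?_⟩
      rw [rho, Finset.mem_filter]
      refine ⟨Finset.mem_univ _, fun p hp => ?_⟩
      dsimp only
      rw [dif_pos r0.isLt]
      have he0 : (⟨(r0 : ℕ), r0.isLt⟩ : Fin N) = r0 := Fin.ext rfl
      rw [he0]
      exact hr0.2 p hp
    · push_neg at hcase
      obtain ⟨p0, hp0T, hp0v⟩ := hcase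
      have hp0i : p0.1 = i := by
        by_contra hne
        have := hTv p0 hp0T
        rw [hwj p0.1 hne] at this
        omega
      have hp0lt : p0.2 < v i + e := by
        have := hTv p0 hp0T
        rwa [hp0i, hwi] at this
      rw [hp0i] at hp0v
      set m := p0.2 - v i with hm
      have hme : m < e := by omega
      have hcol : ∀ p ∈ T.erase p0, p.1 ≠ i := by
        intro p hp
        obtain ⟨hpne, hpT⟩ := Finset.mem_erase.mp hp
        intro hpi
        exact hpne (hinj hpT hp0T (by rw [hpi, hp0i]))
      set T' : Finset ({j : Fin k // j ≠ i} × ℕ) :=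
        (T.erase p0).attach.image
          (fun p => (⟨p.1.1, hcol p.1 p.2⟩, p.1.2)) with hT'
      have hginj : Set.InjOn
          (fun p : {x // x ∈ T.erase p0} =>
            ((⟨p.1.1, hcol p.1 p.2⟩ : {j : Fin k // j ≠ i}), p.1.2))
          ((T.erase p0).attach : Set _) := by
        intro a _ b _ hab
        simp only [Prod.mk.injEq, Subtype.mk.injEq] at hab
        exact Subtype.ext (Prod.ext hab.1 hab.2)
      have hT'card : T'.card = t - 1 := by
        rw [hT', Finset.card_image_of_injOn hginj, Finset.card_attach,
          Finset.card_erase_of_mem hp0T, hTc]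
      have hT'int : IsInteraction (fun j : {j : Fin k // j ≠ i} => v j.1) (t - 1) T' := by
        refine ⟨hT'card, ?_, ?_⟩
        · rw [hT', Finset.image_image]
          have hfinj : Set.InjOn
              (Prod.fst ∘ fun p : {x // x ∈ T.erase p0} =>
                ((⟨p.1.1, hcol p.1 p.2⟩ : {j : Fin k // j ≠ i}), p.1.2))
              ((T.erase p0).attach : Set _) := by
            intro a _ b _ hab
            simp only [Function.comp, Subtype.mk.injEq] at hab
            exact Subtype.ext
              (hinj (Finset.mem_of_mem_erase a.2) (Finset.mem_of_mem_erase b.2) hab)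
          rw [Finset.card_image_of_injOn hfinj, Finset.card_attach,
            Finset.card_erase_of_mem hp0T, hTc]
        · intro q hq
          rw [hT', Finset.mem_image] at hq
          obtain ⟨p, hp, rfl⟩ := hq
          have := hTv p.1 (Finset.mem_of_mem_erase p.2)
          rwa [hwj p.1.1 (hcol p.1 p.2)] at this
      obtain ⟨r', hr'⟩ := Finset.card_pos.mp (hBcov T' hT'int)
      rw [rho, Finset.mem_filter] at hr'
      have hN' : 0 < N' := r'.pos
      have hrowlt : N + (m * N' + (r' : ℕ)) < N + e * N' := by
        have h1 : m * N' + (r' : ℕ) < (m + 1) * N' := by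
          rw [add_mul, one_mul]
          have := r'.isLt
          omega
        have h2 : (m + 1) * N' ≤ e * N' := Nat.mul_le_mul_right _ (by omega)
        omega
      refine Finset.card_pos.mpr ⟨⟨N + (m * N' + (r' : ℕ)), hrowlt⟩, ?_⟩
      rw [rho, Finset.mem_filter]
      refine ⟨Finset.mem_univ _, fun p hp => ?_⟩
      dsimp only
      rw [dif_neg (by omega)]
      have hsub : N + (m * N' + (r' : ℕ)) - N = m * N' + (r' : ℕ) := by omega
      by_cases hpp : p = p0
      · subst hpp
        rw [dif_pos hp0i]
        rw [hsub, Nat.mul_comm m N', Nat.mul_add_div hN', Nat.div_eq_of_lt r'.isLt]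
        omega
      · have hpi : p.1 ≠ i := hcol p (Finset.mem_erase.mpr ⟨hpp, hp⟩)
        rw [dif_neg hpi]
        have hmod : (N + (m * N' + (r' : ℕ)) - N) % N' = (r' : ℕ) := by
          rw [hsub, Nat.mul_comm m N', Nat.mul_add_mod, Nat.mod_eq_of_lt r'.isLt]
        have hfin : (⟨(N + (m * N' + (r' : ℕ)) - N) % N',
            Nat.mod_lt _ hN'⟩ : Fin N') = r' := Fin.ext hmod
        rw [hfin]
        have hmem : ((⟨p.1, hpi⟩ : {j : Fin k // j ≠ i}), p.2) ∈ T' := by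
          rw [hT', Finset.mem_image]
          exact ⟨⟨p, Finset.mem_erase.mpr ⟨hpp, hp⟩⟩, Finset.mem_attach _ _, rfl⟩
        exact hr'.2 _ hmem
end
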